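/- arXiv:1809.05016 — 5 statements merged into one kernel-verified Lean document; each statement's English description precedes it below -/
import Mathlib

section
/- For every d ≥ 1, the matrix over ℚ whose rows are indexed by the partitions ν of 2d all of whose parts are odd, whose columns are indexed by the partitions ρ of 2d all of whose parts are even, and whose (ν, ρ)-entry is C(ν, ρ), has rank equal to p(d), the number of partitions of d; that is, the matrix has full column rank. -/
open scoped BigOperators

noncomputable section

/-- `C(ν, ρ)`: the number of functions `f` from the (indexed) parts of `ν` to the
(indexed) parts of `ρ` such that for every part of `ρ` the parts of `ν` mapped to it
sum to it. -/
def Cfun (ν ρ : Multiset ℕ) : ℕ :=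
  Nat.card {f : Fin ν.toList.length → Fin ρ.toList.length //
    ∀ j, (∑ i ∈ Finset.univ.filter fun i => f i = j, ν.toList.get i) = ρ.toList.get j}

/-- The matrix `(C(ν, ρ))` with rows the odd-part partitions of `2d` and columns the
even-part partitions of `2d`, with entries in `ℚ`. -/
def Cmatrix (d : ℕ) :
    Matrix {p : Nat.Partition (2 * d) // ∀ x ∈ p.parts, Odd x}
      {p : Nat.Partition (2 * d) // ∀ x ∈ p.parts, Even x} ℚ :=
  fun νp ρp => (Cfun νp.1.parts ρp.1.parts : ℚ)

/-!
For a partition `λ ⊢ d` let `ν(λ) ⊢ 2d` replace every part `a` by the two odd parts `2a - 1` and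
`1`, and let `2λ` double every part. The square submatrix with rows `ν(λ)` and columns `2λ` is
triangular with nonzero diagonal for the order given by the statistics
`N_k(λ) = ∑ᵢ min λᵢ k`, which determine `λ`. Indeed, if the parts of `ν(λ)` assemble into `2μ`,
every block of odd parts with sum `2s` contributes at least `2 min s k` to `N_{2k-1}`, while
`N_{2k-1}(ν(λ)) = 2 N_k(λ)`; hence `N_k(μ) ≤ N_k(λ)` for all `k`.
-/

theorem Matrix.rank_eq_card_width_of_triangular {m n ι β K : Type*} [Fintype n] [Fintype ι]
    [PartialOrder β] [Field K] (A : Matrix m n K) (row : ι → m) (col : ι ≃ n) (φ : ι → β)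
    (hφ : Function.Injective φ) (hdiag : ∀ i, A (row i) (col i) ≠ 0)
    (htri : ∀ i j, A (row i) (col j) ≠ 0 → φ j ≤ φ i) :
    A.rank = Fintype.card n := by
  classical
  let _ : PartialOrder ι := PartialOrder.lift φ hφ
  have hinj : Function.Injective A.mulVecLin := by
    rw [← LinearMap.ker_eq_bot, LinearMap.ker_eq_bot']
    intro v hv
    by_contra hne
    obtain ⟨x, hx⟩ := Function.ne_iff.1 hne
    -- in the row of a `φ`-minimal index of the support of `v`, only the diagonal term survives
    obtain ⟨i, hi⟩ := (Finset.univ.filter fun i => v (col i) ≠ 0).exists_minimal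
      ⟨col.symm x, by simpa using hx⟩
    have hrow : A.mulVec v (row i) = A (row i) (col i) * v (col i) := by
      rw [Matrix.mulVec, dotProduct, ← col.sum_comp]
      refine Finset.sum_eq_single i (fun j _ hji => ?_) (by simp)
      by_contra h
      exact hji (hi.eq_of_le (by simpa using right_ne_zero_of_mul h)
        (htri i j (left_ne_zero_of_mul h)))
    have hvi : v (col i) ≠ 0 := by simpa using hi.prop
    exact mul_ne_zero (hdiag i) hvi (hrow ▸ congrFun hv (row i))
  rw [Matrix.rank, LinearMap.finrank_range_of_inj hinj, Module.finrank_fintype_fun_eq_card]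

theorem List.exists_fiberwise_sum_eq {α ι : Type*} [Fintype ι] [DecidableEq ι] (l : List α)
    (M : ι → Multiset α) (h : ∑ j, M j = l) :
    ∃ f : Fin l.length → ι, ∀ j, ∑ i with f i = j, {l.get i} = M j := by
  classical
  simp only [Finset.sum_filter]
  induction l generalizing M with
  | nil =>
    refine ⟨Fin.elim0, fun j => ?_⟩
    simpa using ((Finset.sum_eq_zero_iff.1 h) j (Finset.mem_univ j)).symm
  | cons a t ih =>
    obtain ⟨j₀, -, ha⟩ := Multiset.mem_sum.1 (by simp [h] : a ∈ ∑ j, M j)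
    set M' := Function.update M j₀ ((M j₀).erase a)
    have hsplit : ∀ j, M j = (Pi.single j₀ {a} : ι → Multiset α) j + M' j := by
      intro j
      by_cases hj : j = j₀
      · subst hj
        simp [M', Multiset.singleton_add, Multiset.cons_erase ha]
      · simp [M', hj]
    have hM' : ∑ j, M' j = t := by
      rw [← Multiset.cons_inj_right a, ← Multiset.singleton_add]
      simpa [hsplit, Finset.sum_add_distrib] using h
    obtain ⟨f, hf⟩ := ih M' hM'
    refine ⟨Fin.cons j₀ f, fun j => ?_⟩
    refine (Fin.sum_univ_succ (n := t.length) _).trans ?_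
    rw [hsplit j, ← hf j, Pi.single_apply]
    simp [eq_comm]

theorem Multiset.sum_fin_toList_get {α M : Type*} [AddCommMonoid M] (s : Multiset α)
    (g : α → M) : ∑ i : Fin s.toList.length, g (s.toList.get i) = (s.map g).sum := by
  conv_rhs => rw [← Multiset.coe_toList s]
  simp

theorem cfun_ne_zero_iff (ν ρ : Multiset ℕ) :
    Cfun ν ρ ≠ 0 ↔ ∃ M : Fin ρ.toList.length → Multiset ℕ,
      ∑ j, M j = ν ∧ ∀ j, (M j).sum = ρ.toList.get j := by
  rw [Cfun, ← Nat.pos_iff_ne_zero, Finite.card_pos_iff]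
  constructor
  · rintro ⟨f, hf⟩
    refine ⟨fun j => ∑ i with f i = j, {ν.toList.get i}, ?_, fun j => ?_⟩
    · rw [Finset.sum_fiberwise]
      simp
    · simpa [Multiset.sum_sum] using hf j
  · rintro ⟨M, hsum, hblock⟩
    obtain ⟨f, hf⟩ := ν.toList.exists_fiberwise_sum_eq M (by rw [hsum, Multiset.coe_toList])
    exact ⟨⟨f, fun j => by simpa [← hf j, Multiset.sum_sum] using hblock j⟩⟩

namespace Multiset

def truncSum (k : ℕ) : Multiset ℕ →+ ℕ :=
  sumAddMonoidHom.comp (mapAddMonoidHom (min · k))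

theorem truncSum_apply (k : ℕ) (s : Multiset ℕ) : truncSum k s = (s.map (min · k)).sum := rfl

theorem truncSum_succ (k : ℕ) (s : Multiset ℕ) :
    truncSum (k + 1) s = truncSum k s + s.countP (k < ·) := by
  induction s using Multiset.induction_on with
  | empty => simp
  | cons a s ih =>
    simp only [truncSum_apply, map_cons, sum_cons, countP_cons] at ih ⊢
    split_ifs <;> omega

theorem countP_lt_eq_add_count (v : ℕ) (s : Multiset ℕ) :
    s.countP (v < ·) = s.countP (v + 1 < ·) + s.count (v + 1) := by
  induction s using Multiset.induction_on with
  | empty => simp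
  | cons a s ih =>
    simp only [countP_cons, count_cons]
    split_ifs <;> omega

theorem eq_of_truncSum_eq {s t : Multiset ℕ} (hs : 0 ∉ s) (ht : 0 ∉ t)
    (h : ∀ k, truncSum k s = truncSum k t) : s = t := by
  have hcount : ∀ k, s.countP (k < ·) = t.countP (k < ·) := fun k => by
    have := truncSum_succ k s
    have := truncSum_succ k t
    have := h k
    have := h (k + 1)
    omega
  ext (_ | v)
  · rw [count_eq_zero.2 hs, count_eq_zero.2 ht]
  · have := countP_lt_eq_add_count v s
    have := countP_lt_eq_add_count v t
    have := hcount v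
    have := hcount (v + 1)
    omega

theorem two_mul_min_le_truncSum {w : Multiset ℕ} (hw : ∀ x ∈ w, Odd x) {s : ℕ}
    (hs : w.sum = 2 * s) (k : ℕ) : 2 * min s k ≤ truncSum (2 * k - 1) w := by
  classical
  by_cases hsmall : ∀ x ∈ w, x ≤ 2 * k - 1
  · have : truncSum (2 * k - 1) w = w.sum := by
      rw [truncSum_apply, map_congr rfl fun x hx => min_eq_left (hsmall x hx), map_id']
    omega
  · push Not at hsmall
    obtain ⟨x, hx, hxk⟩ := hsmall
    -- `x` is odd and `w.sum` is even, so `w` has a second (odd, hence positive) element `y`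
    have hrest : (w.erase x).sum ≠ 0 := by
      have := sum_erase hx
      obtain ⟨c, hc⟩ := hw x hx
      omega
    obtain ⟨y, hy⟩ := exists_mem_of_ne_zero (ne_of_apply_ne sum (by simpa using hrest))
    have hy_pos : 0 < y := (hw y (mem_of_mem_erase hy)).pos
    rw [← cons_erase hx, ← cons_erase hy]
    simp only [truncSum_apply, map_cons, sum_cons]
    omega

end Multiset

namespace Nat.Partition

open Multiset

variable {d : ℕ}

theorem truncSum_injective :
    Function.Injective fun (p : Nat.Partition d) k => truncSum k p.parts :=
  fun p q h => Nat.Partition.ext <|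
    eq_of_truncSum_eq (fun h0 => (p.parts_pos h0).false) (fun h0 => (q.parts_pos h0).false)
      (congrFun h)

def double (p : Nat.Partition d) : Nat.Partition (2 * d) where
  parts := p.parts.map (2 * ·)
  parts_pos := by
    simp only [mem_map]
    rintro _ ⟨a, ha, rfl⟩
    exact Nat.mul_pos two_pos (p.parts_pos ha)
  parts_sum := by rw [sum_map_mul_left, map_id', p.parts_sum]

theorem even_of_mem_double (p : Nat.Partition d) : ∀ x ∈ p.double.parts, Even x := by
  simp only [double, mem_map]
  rintro _ ⟨a, -, rfl⟩
  exact even_two_mul a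

def halve (p : {p : Nat.Partition (2 * d) // ∀ x ∈ p.parts, Even x}) : Nat.Partition d where
  parts := p.1.parts.map (· / 2)
  parts_pos := by
    simp only [mem_map]
    rintro _ ⟨x, hx, rfl⟩
    have := p.1.parts_pos hx
    obtain ⟨c, rfl⟩ := p.2 x hx
    omega
  parts_sum := by
    have h : (p.1.parts.map fun x => 2 * (x / 2)).sum = 2 * d := by
      rw [map_congr rfl fun x hx => Nat.two_mul_div_two_of_even (p.2 x hx), map_id',
        p.1.parts_sum]
    rw [sum_map_mul_left] at h
    omega

def doubleEquiv (d : ℕ) :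
    Nat.Partition d ≃ {p : Nat.Partition (2 * d) // ∀ x ∈ p.parts, Even x} where
  toFun p := ⟨p.double, p.even_of_mem_double⟩
  invFun := halve
  left_inv p := Nat.Partition.ext <| by
    simp [double, halve, map_map]
  right_inv p := Subtype.ext <| Nat.Partition.ext <| by
    simp only [double, halve, map_map, Function.comp_def]
    rw [map_congr rfl fun x hx => Nat.two_mul_div_two_of_even (p.2 x hx), map_id']

def oddSplit (p : Nat.Partition d) : Nat.Partition (2 * d) where
  parts := p.parts.bind fun a => {2 * a - 1, 1}
  parts_pos := by
    simp only [mem_bind, insert_eq_cons, mem_cons, mem_singleton]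
    rintro _ ⟨a, ha, rfl | rfl⟩
    · have := p.parts_pos ha
      omega
    · exact one_pos
  parts_sum := by
    have h : ∀ a ∈ p.parts, ({2 * a - 1, 1} : Multiset ℕ).sum = 2 * a := fun a ha => by
      have := p.parts_pos ha
      simp only [insert_eq_cons, sum_cons, sum_singleton]
      omega
    rw [sum_bind, map_congr rfl h, sum_map_mul_left, map_id', p.parts_sum]

theorem odd_of_mem_oddSplit (p : Nat.Partition d) : ∀ x ∈ p.oddSplit.parts, Odd x := by
  simp only [oddSplit, mem_bind, insert_eq_cons, mem_cons, mem_singleton]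
  rintro _ ⟨a, ha, rfl | rfl⟩
  · have := p.parts_pos ha
    exact ⟨a - 1, by omega⟩
  · exact odd_one

theorem truncSum_oddSplit (p : Nat.Partition d) (k : ℕ) :
    truncSum (2 * k - 1) p.oddSplit.parts = 2 * truncSum k p.parts := by
  have h : ∀ a ∈ p.parts,
      (({2 * a - 1, 1} : Multiset ℕ).map (min · (2 * k - 1))).sum = 2 * min a k := fun a ha => by
    have := p.parts_pos ha
    simp only [insert_eq_cons, map_cons, map_singleton, sum_cons, sum_singleton]
    omega
  rw [truncSum_apply, oddSplit, map_bind, sum_bind, map_congr rfl h, sum_map_mul_left,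
    truncSum_apply]

theorem cfun_oddSplit_double_ne_zero (p : Nat.Partition d) :
    Cfun p.oddSplit.parts p.double.parts ≠ 0 := by
  set ρ := p.double.parts
  rw [cfun_ne_zero_iff]
  refine ⟨fun j => {ρ.toList.get j - 1, 1}, ?_, fun j => ?_⟩
  · rw [sum_fin_toList_get ρ fun x => {x - 1, 1}]
    simp [ρ, double, oddSplit, Multiset.bind, join, map_map]
  · have := p.double.parts_pos (mem_toList.1 (List.get_mem _ j))
    simp only [insert_eq_cons, sum_cons, sum_singleton]
    omega

theorem truncSum_le_of_cfun_ne_zero {p q : Nat.Partition d}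
    (h : Cfun p.oddSplit.parts q.double.parts ≠ 0) (k : ℕ) :
    truncSum k q.parts ≤ truncSum k p.parts := by
  set ρ := q.double.parts
  obtain ⟨M, hsum, hblock⟩ := (cfun_ne_zero_iff _ _).1 h
  have hodd : ∀ j, ∀ x ∈ M j, Odd x := fun j x hx =>
    p.odd_of_mem_oddSplit x (hsum ▸ Multiset.mem_sum.2 ⟨j, Finset.mem_univ j, hx⟩)
  have hhalf : ∀ j, (M j).sum = 2 * (ρ.toList.get j / 2) := fun j => by
    rw [hblock, Nat.two_mul_div_two_of_even
      (q.even_of_mem_double _ (mem_toList.1 (List.get_mem _ _)))]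
  suffices 2 * truncSum k q.parts ≤ 2 * truncSum k p.parts by omega
  calc 2 * truncSum k q.parts = ∑ j, 2 * min (ρ.toList.get j / 2) k := by
        rw [sum_fin_toList_get ρ fun x => 2 * min (x / 2) k]
        simp [ρ, double, map_map, sum_map_mul_left, truncSum_apply]
    _ ≤ ∑ j, truncSum (2 * k - 1) (M j) :=
        Finset.sum_le_sum fun j _ => two_mul_min_le_truncSum (hodd j) (hhalf j) k
    _ = 2 * truncSum k p.parts := by rw [← map_sum, hsum, truncSum_oddSplit]

end Nat.Partition

open Nat.Partition in
theorem Cmatrix_rank_general (d : ℕ) :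
    (Cmatrix d).rank = Fintype.card (Nat.Partition d) := by
  let row (p : Nat.Partition d) : {p : Nat.Partition (2 * d) // ∀ x ∈ p.parts, Odd x} :=
    ⟨p.oddSplit, p.odd_of_mem_oddSplit⟩
  have hdiag : ∀ p, Cmatrix d (row p) (doubleEquiv d p) ≠ 0 :=
    fun p => Nat.cast_ne_zero.2 p.cfun_oddSplit_double_ne_zero
  have htri : ∀ p q, Cmatrix d (row p) (doubleEquiv d q) ≠ 0 →
      (fun k => Multiset.truncSum k q.parts) ≤ fun k => Multiset.truncSum k p.parts :=
    fun _ _ h => truncSum_le_of_cfun_ne_zero (Nat.cast_ne_zero.1 h)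
  rw [Matrix.rank_eq_card_width_of_triangular _ row (doubleEquiv d) _ truncSum_injective
    hdiag htri]
  exact (Fintype.card_congr (doubleEquiv d)).symm

/-- For every `d ≥ 1`, the matrix `(C(ν, ρ))_{ν odd, ρ even}` of
partitions of `2d` has rank `p(d)`, the number of partitions of `d`; i.e. it has full
column rank. -/
theorem Cmatrix_rank (d : ℕ) (hd : 1 ≤ d) :
    (Cmatrix d).rank = Fintype.card (Nat.Partition d) :=
  Cmatrix_rank_general d

end
end

section
/- Let ρ = (ρ₁ ≥ ρ₂ ≥ … ≥ ρ_m) be a partition of 2d all of whose parts are even, and let ν(ρ) be the partition of 2d whose parts are ρ₁ − 1, 1, ρ₂ − 1, 1, …, ρ_m − 1, 1 (all of which are odd). Then C(ν(ρ), ρ) ≠ 0, and for every partition ρ' of 2d all of whose parts are even, C(ν(ρ), ρ') ≠ 0 implies that ρ' is greater than or equal to ρ in the lexicographic order on partitions (parts listed in decreasing order, comparing first parts, then second parts, and so on). -/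
open scoped BigOperators

noncomputable section

/-- The parts of a multiset listed in decreasing order. -/
def descList (m : Multiset ℕ) : List ℕ :=
  (m.sort (· ≤ ·)).reverse

/-- The partition `ν(ρ)` with parts `ρ₁ - 1, 1, ρ₂ - 1, 1, …, ρ_m - 1, 1`. -/
def nuOf (ρ : Multiset ℕ) : Multiset ℕ :=
  ρ.map (· - 1) + Multiset.replicate (Multiset.card ρ) 1

/-!
All parts of `ν(ρ)` are odd, so in any assembly of them into even parts `ρ'` the block
containing `ρ₁ - 1` needs a further part: it sums to at least `ρ₁`, whence `ρ'₁ ≥ ρ₁`.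
If `ρ'₁ = ρ₁`, that block is exactly `{ρ₁ - 1, 1}`; deleting it, together with `ρ₁` and `ρ'₁`,
leaves the same situation for `ρ₂ ≥ … ≥ ρ_m`. The blocks `{ρⱼ - 1, 1}` show `C(ν(ρ), ρ) ≠ 0`.
Throughout, `C(ν, ρ) ≠ 0` is used in the form: the multiset `ν` splits into blocks whose
sums are the parts of `ρ`.
-/

namespace List

theorem sum_singleton_get {α : Type*} (l : List α) :
    ∑ i : Fin l.length, ({l.get i} : Multiset α) = l := by
  simp [Finset.sum_eq_multiset_sum, Fin.univ_val_map, ← Multiset.map_coe]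

theorem exists_fiber_sum_eq {α ι : Type*} [AddCommMonoid α] [Fintype ι] [DecidableEq ι]
    (l : List α) (B : ι → Multiset α) (h : (l : Multiset α) = ∑ j, B j) :
    ∃ f : Fin l.length → ι, ∀ j, ∑ i with f i = j, l.get i = (B j).sum := by
  induction l generalizing B with
  | nil =>
    have hB : ∀ j, B j = 0 := fun j ↦
      Finset.sum_eq_zero_iff.1 (by simpa using h.symm) j (Finset.mem_univ j)
    exact ⟨Fin.elim0, fun j ↦ by simp [hB]⟩
  | cons a t ih =>
    obtain ⟨j₀, -, haj⟩ := Multiset.mem_sum.1 (h ▸ Multiset.mem_coe.2 mem_cons_self)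
    obtain ⟨e, he⟩ := Multiset.exists_cons_of_mem haj
    set B' := Function.update B j₀ e
    have hB : ∀ j, B j = (if j = j₀ then {a} else 0) + B' j := by
      intro j
      by_cases hj : j = j₀
      · subst hj; simp [B', he, Multiset.singleton_add]
      · simp [B', hj]
    have ht : (t : Multiset α) = ∑ j, B' j := by
      have : a ::ₘ (t : Multiset α) = a ::ₘ ∑ j, B' j := by
        rw [Multiset.cons_coe, h, Finset.sum_congr rfl fun j _ ↦ hB j, Finset.sum_add_distrib,
          Finset.sum_ite_eq', if_pos (Finset.mem_univ _), Multiset.singleton_add]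
      exact (Multiset.cons_inj_right a).1 this
    obtain ⟨f, hf⟩ := ih B' ht
    refine ⟨Fin.cons j₀ f, fun j ↦ ?_⟩
    rw [hB j, Multiset.sum_add, ← hf j, Finset.sum_filter, Finset.sum_filter]
    simp [Fin.sum_univ_succ, eq_comm, apply_ite Multiset.sum]

theorem exists_blocks_of_map_sum_eq {α : Type*} [AddCommMonoid α] (l : List α)
    (D : Multiset (Multiset α)) (h : D.map Multiset.sum = l) :
    ∃ B : Fin l.length → Multiset α, ∑ j, B j = D.sum ∧ ∀ j, (B j).sum = l.get j := by
  induction l generalizing D with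
  | nil => exact ⟨Fin.elim0, by simp_all⟩
  | cons a t ih =>
    obtain ⟨b, hbD, rfl⟩ := Multiset.mem_map.1 (h ▸ Multiset.mem_coe.2 mem_cons_self)
    obtain ⟨D', rfl⟩ := Multiset.exists_cons_of_mem hbD
    obtain ⟨B, hB, hBsum⟩ := ih D' <| (Multiset.cons_inj_right b.sum).1 <| by
      rw [← Multiset.map_cons, h, Multiset.cons_coe]
    refine ⟨Fin.cons b B, by simp [Fin.sum_univ_succ, hB], fun j ↦ ?_⟩
    cases j using Fin.cases <;> simp [hBsum]

end List

open Multiset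

theorem cfun_ne_zero_iff_s7 (ν ρ : Multiset ℕ) :
    Cfun ν ρ ≠ 0 ↔ ∃ D : Multiset (Multiset ℕ), D.sum = ν ∧ D.map sum = ρ := by
  rw [Cfun, Nat.card_ne_zero, and_iff_left (Finite.of_fintype _)]
  constructor
  · rintro ⟨f, hf⟩
    refine ⟨Finset.univ.val.map fun j ↦ ∑ i with f i = j, {ν.toList.get i}, ?_, ?_⟩
    · change ∑ j, ∑ i with f i = j, {ν.toList.get i} = ν
      rw [Finset.sum_fiberwise, List.sum_singleton_get, coe_toList]
    · rw [map_map]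
      conv_rhs => rw [← coe_toList ρ, ← List.ofFn_get ρ.toList, ← Fin.univ_val_map]
      refine map_congr rfl fun j _ ↦ ?_
      rw [Function.comp_apply, ← hf j]
      exact (map_sum sumAddMonoidHom _ _).trans (by simp)
  · rintro ⟨D, hDν, hDρ⟩
    obtain ⟨B, hB, hBsum⟩ := ρ.toList.exists_blocks_of_map_sum_eq D (by simpa using hDρ)
    obtain ⟨f, hf⟩ := ν.toList.exists_fiber_sum_eq B (by simpa [hB] using hDν.symm)
    exact ⟨⟨f, fun j ↦ (hf j).trans (hBsum j)⟩⟩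

theorem descList_cons {a : ℕ} {s : Multiset ℕ} (h : ∀ b ∈ s, b ≤ a) :
    descList (a ::ₘ s) = a :: descList s := by
  have pairwise_ge (m : Multiset ℕ) : (descList m).Pairwise (· ≥ ·) :=
    List.pairwise_reverse.2 (pairwise_sort m _)
  refine List.Perm.eq_of_pairwise' (pairwise_ge _) (List.pairwise_cons.2 ⟨?_, pairwise_ge s⟩) ?_
  · simpa [descList] using h
  · rw [← coe_eq_coe, ← cons_coe]
    simp [descList]

theorem nuOf_zero : nuOf 0 = 0 := rfl

theorem nuOf_cons (r : ℕ) (s : Multiset ℕ) : nuOf (r ::ₘ s) = {r - 1, 1} + nuOf s := by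
  simp [nuOf, replicate_succ, cons_swap (r - 1) 1]

theorem sum_map_pair_eq_nuOf (s : Multiset ℕ) :
    (s.map fun r ↦ ({r - 1, 1} : Multiset ℕ)).sum = nuOf s := by
  induction s using Multiset.induction_on with
  | empty => rfl
  | cons r s ih => rw [map_cons, sum_cons, ih, nuOf_cons]

theorem odd_of_mem_nuOf {s : Multiset ℕ} (he : ∀ x ∈ s, Even x) (hp : ∀ x ∈ s, 0 < x)
    {y : ℕ} (hy : y ∈ nuOf s) : Odd y := by
  rcases mem_add.1 hy with hy | hy
  · obtain ⟨x, hx, rfl⟩ := mem_map.1 hy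
    exact Nat.Even.sub_odd (hp x hx) (he x hx) odd_one
  · simp [eq_of_mem_replicate hy]

theorem Multiset.eq_singleton_one_of_sum_eq_one {s : Multiset ℕ} (hs : ∀ x ∈ s, 0 < x)
    (h : s.sum = 1) : s = {1} := by
  obtain ⟨x, hx⟩ := exists_mem_of_ne_zero (s := s) (by rintro rfl; simp at h)
  obtain ⟨t, rfl⟩ := exists_cons_of_mem hx
  have hx1 : x = 1 := by have := hs x hx; simp at h; omega
  have ht : t = 0 := eq_zero_of_forall_notMem fun y hy ↦ by
    have := hs y (mem_cons_of_mem hy)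
    have := le_sum_of_mem hy
    simp at h; omega
  simp [hx1, ht]

theorem exists_block_sum_ge {P : Multiset ℕ} {D : Multiset (Multiset ℕ)}
    (hPe : ∀ x ∈ P, Even x) (hPp : ∀ x ∈ P, 0 < x) (hD : D.sum = nuOf P)
    (hDe : ∀ d ∈ D, Even d.sum) {r : ℕ} (hr : r ∈ P) :
    ∃ d ∈ D, r ≤ d.sum ∧ (d.sum = r → d = {r - 1, 1}) := by
  obtain ⟨d, hdD, hrd⟩ : ∃ d ∈ D, r - 1 ∈ d :=
    mem_join.1 <| show r - 1 ∈ D.sum from hD ▸ mem_add.2 (.inl (mem_map_of_mem _ hr))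
  have hodd : ∀ x ∈ d, Odd x := fun x hx ↦
    odd_of_mem_nuOf hPe hPp (hD ▸ mem_of_le (le_sum_of_mem hdD) hx)
  obtain ⟨e, rfl⟩ := exists_cons_of_mem hrd
  have hepos : ∀ x ∈ e, 0 < x := fun x hx ↦ (hodd x (mem_cons_of_mem hx)).pos
  -- the block of `r - 1` has odd parts and an even sum, so `r - 1` is not alone in it
  obtain ⟨x, hx⟩ : ∃ x, x ∈ e := exists_mem_of_ne_zero <| by
    rintro rfl
    exact Nat.not_even_iff_odd.2 (hodd _ (mem_cons_self _ _)) (by simpa using hDe _ hdD)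
  have hxe := le_sum_of_mem hx
  have hx0 := hepos x hx
  have hr0 := hPp r hr
  refine ⟨_, hdD, by simp; omega, fun h ↦ ?_⟩
  rw [eq_singleton_one_of_sum_eq_one hepos (by simp at h; omega)]
  rfl

theorem eq_or_lex_of_blocks {P P' : Multiset ℕ} {D : Multiset (Multiset ℕ)}
    (hPe : ∀ x ∈ P, Even x) (hPp : ∀ x ∈ P, 0 < x)
    (hP'e : ∀ x ∈ P', Even x) (hP'p : ∀ x ∈ P', 0 < x)
    (hD : D.sum = nuOf P) (hD' : D.map Multiset.sum = P') :
    P = P' ∨ List.Lex (· < ·) (descList P) (descList P') := by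
  induction P using Multiset.strongInductionOn generalizing P' D with | ih P ih => ?_
  rcases eq_or_ne P 0 with rfl | hP
  · refine .inl (eq_zero_of_forall_notMem fun y hy ↦ ?_).symm
    obtain ⟨d, hdD, rfl⟩ := mem_map.1 (hD' ▸ hy)
    have : d = 0 := le_zero.1 (hD.trans nuOf_zero ▸ le_sum_of_mem hdD)
    simpa [this] using hP'p _ hy
  obtain ⟨r, hrP, hrmax⟩ := exists_max_image id hP
  obtain ⟨Q, rfl⟩ := exists_cons_of_mem hrP
  have hDe : ∀ d ∈ D, Even d.sum := fun d hd ↦ hP'e _ (hD' ▸ mem_map_of_mem _ hd)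
  obtain ⟨d, hdD, hrd, hd⟩ := exists_block_sum_ge hPe hPp hD hDe hrP
  have hdP' : d.sum ∈ P' := hD' ▸ mem_map_of_mem _ hdD
  obtain ⟨r', hr'P', hr'max⟩ := exists_max_image id (s := P') <| by
    rintro rfl; simp at hdP'
  obtain ⟨Q', rfl⟩ := exists_cons_of_mem hr'P'
  have hdr' : d.sum ≤ r' := hr'max _ hdP'
  rw [descList_cons (a := r) fun b hb ↦ hrmax b (mem_cons_of_mem hb),
    descList_cons (a := r') fun b hb ↦ hr'max b (mem_cons_of_mem hb)]
  rcases (hrd.trans hdr').lt_or_eq with hlt | rfl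
  · exact .inr (.rel hlt)
  have hdr : d.sum = r := le_antisymm hdr' hrd
  obtain ⟨E, rfl⟩ := exists_cons_of_mem hdD
  have hE : E.sum = nuOf Q := by
    rwa [sum_cons, nuOf_cons, hd hdr, add_right_inj] at hD
  have hE' : E.map Multiset.sum = Q' := by
    rwa [map_cons, hdr, cons_inj_right] at hD'
  rw [forall_mem_cons] at hPe hPp hP'e hP'p
  rcases ih Q (lt_cons_self Q r) hPe.2 hPp.2 hP'e.2 hP'p.2 hE hE' with h | h
  · exact .inl (h ▸ rfl)
  · exact .inr (.cons h)

/-- For a partition `ρ` of `2d` with all parts even, `C(ν(ρ), ρ) ≠ 0`,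
and for every partition `ρ'` of `2d` with all parts even, `C(ν(ρ), ρ') ≠ 0` implies that
`ρ'` is greater than or equal to `ρ` in the lexicographic order (comparing the parts in
decreasing order). -/
theorem Cfun_triangular (d : ℕ) (ρ : Nat.Partition (2 * d))
    (hρ : ∀ x ∈ ρ.parts, Even x) :
    Cfun (nuOf ρ.parts) ρ.parts ≠ 0 ∧
    ∀ ρ' : Nat.Partition (2 * d), (∀ x ∈ ρ'.parts, Even x) →
      Cfun (nuOf ρ.parts) ρ'.parts ≠ 0 →
      ρ' = ρ ∨ List.Lex (· < ·) (descList ρ.parts) (descList ρ'.parts) := by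
  refine ⟨(cfun_ne_zero_iff_s7 _ _).2 ⟨_, sum_map_pair_eq_nuOf ρ.parts, ?_⟩, fun ρ' hρ' hC ↦ ?_⟩
  · conv_rhs => rw [← map_id ρ.parts]
    rw [map_map]
    refine map_congr rfl fun r hr ↦ ?_
    have := ρ.parts_pos hr
    simp; omega
  · obtain ⟨D, hD, hD'⟩ := (cfun_ne_zero_iff_s7 _ _).1 hC
    exact (eq_or_lex_of_blocks hρ (fun _ ↦ ρ.parts_pos) hρ' (fun _ ↦ ρ'.parts_pos) hD hD').imp
      (fun h ↦ Nat.Partition.ext h.symm) id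

end
end

section
/- Let F be the unique formal power series in two variables u, z over ℚ with constant term 1 satisfying F² · (1 − u) · (1 − u·E₂) = (1 + u·E₁)², where E_j := Σ_{k≥0} (−jz)^k/k! is the power series exp(−jz). Then for every k ≥ 1 there exists a polynomial Q_k ∈ ℚ[X] such that: (i) for every n ≥ 0 the coefficient of uⁿ z^k in F equals Q_k(n); (ii) Q_k(−X) = (−1)^k Q_k(X) (so Q_k is an even polynomial if k is even and an odd polynomial if k is odd); and (iii) Q_k(0) = 0. -/
open scoped BigOperators

noncomputable section

/-- The power series `E_j = exp(-jz) = Σ_{k≥0} (-jz)^k / k!` viewed as a two-variable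
power series in the variables `u = X 0`, `z = X 1` (depending only on `z`). -/
def Eexp (j : ℕ) : MvPowerSeries (Fin 2) ℚ :=
  fun s => if s 0 = 0 then (-(j : ℚ)) ^ (s 1) / (Nat.factorial (s 1)) else 0

/-!
With `t = u e^{-z}` the equation reads `F² (1 - 2t cosh z + t²) = (1 + t)²`, whose only solution
with constant term `1` is `F = (1 + t) Σₙ Pₙ(cosh z) tⁿ`, `Pₙ` the Legendre polynomials: their
generating function `(1 - 2yt + t²)^{-1/2}` follows from Bonnet's recursion. Since
`cosh z = 1 + 2 sinh²(z/2)`, `Pₙ(cosh z) = Σⱼ C(n,j) C(n+j,j) sinh²ʲ(z/2)`, and as `sinh²(z/2)`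
has no constant term only `j ≤ i` contribute to the coefficient of `zⁱ`, a polynomial `Λᵢ(n)`.
Hence for `n ≥ 1` the coefficient of `uⁿ zᵏ`, that of `zᵏ` in `e^{-nz} (Pₙ + Pₙ₋₁)(cosh z)`, is
a polynomial `Q_k(n)`. The symmetry of `C(n,j) C(n+j,j)` under `n ↦ -1 - n` gives
`Λᵢ(-1 - n) = Λᵢ(n)`, and evenness of `sinh²(z/2)` kills `Λᵢ` for odd `i`; together they give
`Q_k(-n) = (-1)ᵏ Q_k(n)`. Finally `Q_k(0) = 2 Λₖ(0) = 2 [zᵏ] P₀ = 0`, which is also the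
coefficient of `u⁰ zᵏ` in `F`.
-/

namespace Polynomial

open scoped Nat

/-- `(-1)ʲ C(X, j) C(X + j, j)`, the `j`-th coefficient of `shiftedLegendre X`. -/
def legendreCoeff (j : ℕ) : ℚ[X] :=
  C ((-1) ^ j / (j ! : ℚ) ^ 2) * descPochhammer ℚ j * (descPochhammer ℚ j).comp (X + (j : ℚ[X]))

theorem legendreCoeff_eval_natCast (j n : ℕ) :
    (legendreCoeff j).eval (n : ℚ) = ((shiftedLegendre n).coeff j : ℚ) := by
  have hj : ((j ! : ℕ) : ℚ) ≠ 0 := by positivity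
  rw [coeff_shiftedLegendre, legendreCoeff, eval_mul, eval_mul, eval_comp, eval_C, eval_add,
    eval_X, eval_natCast, ← Nat.cast_add, descPochhammer_eval_eq_descFactorial,
    descPochhammer_eval_eq_descFactorial, Nat.descFactorial_eq_factorial_mul_choose,
    Nat.descFactorial_eq_factorial_mul_choose, Nat.choose_symm_add]
  push_cast
  field_simp

theorem legendreCoeff_eval (j : ℕ) (y : ℚ) :
    (legendreCoeff j).eval y =
      (-1) ^ j / (j ! : ℚ) ^ 2 * (ascPochhammer ℚ (2 * j)).eval (y - j + 1) := by
  have h := congrArg (eval (y - j + 1)) (ascPochhammer_mul ℚ j j)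
  rw [eval_mul, eval_comp, eval_add, eval_X, eval_natCast, ← two_mul] at h
  rw [legendreCoeff, eval_mul, eval_mul, eval_comp, eval_C, eval_add, eval_X, eval_natCast,
    descPochhammer_eval_eq_ascPochhammer, descPochhammer_eval_eq_ascPochhammer, ← h, mul_assoc]
  congr 3
  ring

theorem legendreCoeff_eval_neg_one_sub (j : ℕ) (y : ℚ) :
    (legendreCoeff j).eval (-1 - y) = (legendreCoeff j).eval y := by
  rw [legendreCoeff_eval, legendreCoeff_eval, show -1 - y - j + 1 = -(y + j) by ring,
    ascPochhammer_eval_neg_eq_descPochhammer, descPochhammer_eval_eq_ascPochhammer, pow_mul]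
  push_cast
  ring_nf

theorem legendreCoeff_succ_recurrence (i : ℕ) (y : ℚ) :
    (y + 2) * (legendreCoeff (i + 1)).eval (y + 2) + (y + 1) * (legendreCoeff (i + 1)).eval y =
      (2 * y + 3) *
        ((legendreCoeff (i + 1)).eval (y + 1) - 2 * (legendreCoeff i).eval (y + 1)) := by
  have hsucc (N : ℕ) (t : ℚ) :
      (ascPochhammer ℚ (N + 1)).eval t = t * (ascPochhammer ℚ N).eval (t + 1) := by
    rw [ascPochhammer_succ_left, eval_mul, eval_X, eval_comp, eval_add, eval_X, eval_one]
  set m := (ascPochhammer ℚ (2 * i)).eval (y - i + 2)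
  have hm (t : ℚ) (ht : t = y - i + 2) : (ascPochhammer ℚ (2 * i)).eval t = m := by rw [ht]
  have h2 : 2 * (i + 1) = 2 * i + 1 + 1 := by ring
  have e0 : (ascPochhammer ℚ (2 * (i + 1))).eval (y - (i + 1 : ℕ) + 1) =
      (y - i) * (y - i + 1) * m := by
    rw [h2, hsucc, hsucc, hm _ (by push_cast; ring)]; push_cast; ring
  have e1 : (ascPochhammer ℚ (2 * (i + 1))).eval (y + 1 - (i + 1 : ℕ) + 1) =
      (y - i + 1) * (y + i + 2) * m := by
    rw [h2, hsucc, ascPochhammer_succ_eval, hm _ (by push_cast; ring)]; push_cast; ring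
  have e2 : (ascPochhammer ℚ (2 * (i + 1))).eval (y + 2 - (i + 1 : ℕ) + 1) =
      (y + i + 2) * (y + i + 3) * m := by
    rw [h2, ascPochhammer_succ_eval, ascPochhammer_succ_eval, hm _ (by push_cast; ring)]
    push_cast; ring
  have e3 : (ascPochhammer ℚ (2 * i)).eval (y + 1 - i + 1) = m := hm _ (by ring)
  simp only [legendreCoeff_eval, e0, e1, e2, e3, Nat.factorial_succ]
  push_cast
  field_simp
  ring

theorem shiftedLegendre_add_two (n : ℕ) :
    ((n : ℤ[X]) + 2) * shiftedLegendre (n + 2) =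
      (2 * (n : ℤ[X]) + 3) * (1 - 2 * X) * shiftedLegendre (n + 1) -
        ((n : ℤ[X]) + 1) * shiftedLegendre n := by
  ext j
  apply Int.cast_injective (α := ℚ)
  rcases j with _ | i
  · simp [add_mul, sub_mul, mul_sub, ← legendreCoeff_eval_natCast, legendreCoeff]
    ring
  · simp only [add_mul, sub_mul, mul_sub, mul_assoc, coeff_add, coeff_sub, coeff_natCast_mul,
      coeff_ofNat_mul, coeff_X_mul, Int.cast_add, Int.cast_sub, Int.cast_mul, Int.cast_natCast,
      Int.cast_ofNat, one_mul, ← legendreCoeff_eval_natCast, Nat.cast_add, Nat.cast_ofNat,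
      Nat.cast_one]
    linear_combination legendreCoeff_succ_recurrence i n

end Polynomial

namespace PowerSeries

open Polynomial (shiftedLegendre)

section CommSemiring

variable {R : Type*} [CommSemiring R]

@[simp]
theorem rescale_C (a c : R) : rescale a (C c) = C c := by
  ext n
  cases n <;> simp [coeff_rescale, coeff_C]

@[simp]
theorem constantCoeff_rescale (a : R) (f : R⟦X⟧) :
    constantCoeff (rescale a f) = constantCoeff f := by
  rw [← coeff_zero_eq_constantCoeff_apply, coeff_rescale, pow_zero, one_mul,
    coeff_zero_eq_constantCoeff_apply]

theorem coeff_eval₂_eq_sum {A : Type*} [CommSemiring A] (f : R →+* A) (p : Polynomial R)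
    {x : A⟦X⟧} (hx : constantCoeff x = 0) (i : ℕ) :
    coeff i (p.eval₂ (C.comp f) x) =
      ∑ j ∈ Finset.range (i + 1), f (p.coeff j) * coeff i (x ^ j) := by
  rw [Polynomial.eval₂_eq_sum_range' _ (n := p.natDegree + i + 2) (p := p) (by omega), map_sum]
  simp only [RingHom.comp_apply, coeff_C_mul]
  refine (Finset.sum_subset (Finset.range_subset_range.2 (by omega)) fun j _ hj => ?_).symm
  rw [X_pow_dvd_iff.1 (pow_dvd_pow_of_dvd (X_dvd_iff.2 hx) j) i (by simpa using hj), mul_zero]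

end CommSemiring

theorem rescale_exp_pow {A : Type*} [CommRing A] [Algebra ℚ A] (a : A) (n : ℕ) :
    rescale a (exp A) ^ n = rescale (n * a) (exp A) := by
  rw [← map_pow, exp_pow_eq_rescale_exp, rescale_rescale]

variable {A : Type*} [CommRing A]

/-- Written with `eval₂`: `aeval` would fix the `ℤ`-algebra `Ring.toIntAlgebra A`, which for
`A = R⟦X⟧` is not reducibly the `MvPowerSeries` one that power-series lemmas use. -/
def shiftedLegendreGenFun (x : A) : A⟦X⟧ :=
  mk fun n => (shiftedLegendre n).eval₂ (Int.castRingHom A) x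

@[simp]
theorem constantCoeff_shiftedLegendreGenFun (x : A) :
    constantCoeff (shiftedLegendreGenFun x) = 1 := by
  simp [shiftedLegendreGenFun, ← coeff_zero_eq_constantCoeff_apply, Polynomial.shiftedLegendre]

theorem shiftedLegendreGenFun_sq_mul [IsAddTorsionFree A] (x : A) :
    shiftedLegendreGenFun x ^ 2 * (1 - 2 * C (1 - 2 * x) * X + X ^ 2) = 1 := by
  set G := shiftedLegendreGenFun x
  set y := 1 - 2 * x
  have hG (n : ℕ) : coeff n G = (shiftedLegendre n).eval₂ (Int.castRingHom A) x := coeff_mk _ _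
  have h0 : constantCoeff G = 1 := constantCoeff_shiftedLegendreGenFun x
  have h1 : coeff 1 G = y := by
    simp [hG, Polynomial.shiftedLegendre, Finset.sum_range_succ, y]; ring
  have hrec (n : ℕ) : ((n : A) + 2) * coeff (n + 2) G =
      (2 * n + 3) * y * coeff (n + 1) G - (n + 1) * coeff n G := by
    simpa [hG, y, map_ofNat] using congrArg (Polynomial.eval₂RingHom (Int.castRingHom A) x)
      (Polynomial.shiftedLegendre_add_two n)
  have hder : (1 - C (2 * y) * X + X ^ 2) * d⁄dX A G = (C y - X) * G := by
    ext n
    rcases n with _ | _ | n <;>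
      simp only [sub_mul, add_mul, one_mul, mul_assoc, map_sub, map_add, coeff_C_mul,
        coeff_X_pow_mul', coeff_succ_X_mul, coeff_zero_X_mul, coeff_derivative] <;> norm_num
    · rw [h0, h1, mul_one]
    · linear_combination (by simpa using hrec 0 : (0 + 2) * coeff 2 G = _)
    · have h := hrec (n + 1)
      push_cast at h ⊢
      linear_combination h
  have hC : C (2 * y) = 2 * C y := by rw [map_mul, map_ofNat]
  rw [← hC]
  refine derivative.ext ?_ (by simp [h0])
  rw [Derivation.leibniz, Derivation.leibniz_pow, Derivation.map_one_eq_zero, smul_eq_mul,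
    smul_eq_mul, nsmul_eq_mul, show d⁄dX A (1 - C (2 * y) * X + X ^ 2) = -C (2 * y) + 2 * X by simp]
  linear_combination (2 * G) * hder - G ^ 2 * hC

end PowerSeries

namespace MvPowerSeries

open Finsupp (single)
open Finset.HasAntidiagonal (antidiagonal mem_antidiagonal)

variable {R : Type*} [CommSemiring R]

theorem single_zero_add_single_one_eq (s : Fin 2 →₀ ℕ) : single 0 (s 0) + single 1 (s 1) = s := by
  ext a
  fin_cases a <;> simp

theorem single_zero_add_single_one_inj {n k n' k' : ℕ} :
    single (0 : Fin 2) n + single 1 k = single 0 n' + single 1 k' ↔ n = n' ∧ k = k' :=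
  ⟨fun h => ⟨by simpa using congr($h 0), by simpa using congr($h 1)⟩, by rintro ⟨rfl, rfl⟩; rfl⟩

theorem coeff_single_zero_add_single_one_mul (f g : MvPowerSeries (Fin 2) R) (n k : ℕ) :
    coeff (single 0 n + single 1 k) (f * g) =
      ∑ p ∈ antidiagonal n ×ˢ antidiagonal k,
        coeff (single 0 p.1.1 + single 1 p.2.1) f * coeff (single 0 p.1.2 + single 1 p.2.2) g := by
  rw [coeff_mul]
  refine Finset.sum_nbij' (fun p => ((p.1 0, p.2 0), (p.1 1, p.2 1)))
    (fun q => (single 0 q.1.1 + single 1 q.2.1, single 0 q.1.2 + single 1 q.2.2))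
    (fun p hp => ?_) (fun q hq => ?_) (fun p _ => ?_) (fun q _ => by simp)
    (fun p _ => by simp only [single_zero_add_single_one_eq])
  · rw [mem_antidiagonal] at hp
    simp only [Finset.mem_product, mem_antidiagonal]
    exact ⟨by simpa using congr($hp 0), by simpa using congr($hp 1)⟩
  · simp only [Finset.mem_product, mem_antidiagonal] at hq
    rw [mem_antidiagonal, add_add_add_comm, ← Finsupp.single_add, ← Finsupp.single_add,
      hq.1, hq.2]
  · ext : 1 <;> exact single_zero_add_single_one_eq _

/-- `R⟦X₀, X₁⟧ → R⟦X₁⟧⟦X₀⟧`: the outer variable is `X 0`. -/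
def curryFinTwo : MvPowerSeries (Fin 2) R →+* PowerSeries (PowerSeries R) where
  toFun f := PowerSeries.mk fun n => PowerSeries.mk fun k => coeff (single 0 n + single 1 k) f
  map_zero' := by ext; simp
  map_add' f g := by ext; simp
  map_one' := by
    ext n k
    rw [PowerSeries.coeff_mk, PowerSeries.coeff_mk, coeff_one, ← Finsupp.single_zero 0,
      ← add_zero (single 0 0), ← Finsupp.single_zero 1]
    simp only [single_zero_add_single_one_inj]
    rcases eq_or_ne n 0 with rfl | hn <;> simp_all [PowerSeries.coeff_one]
  map_mul' f g := by
    ext n k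
    simp only [PowerSeries.coeff_mk, PowerSeries.coeff_mul, coeff_single_zero_add_single_one_mul,
      map_sum, Finset.sum_product]

@[simp]
theorem coeff_coeff_curryFinTwo (f : MvPowerSeries (Fin 2) R) (n k : ℕ) :
    PowerSeries.coeff k (PowerSeries.coeff n (curryFinTwo f)) =
      coeff (single 0 n + single 1 k) f := by
  simp [curryFinTwo]

theorem curryFinTwo_X_zero : curryFinTwo (X 0 : MvPowerSeries (Fin 2) R) = PowerSeries.X := by
  ext n k
  rw [coeff_coeff_curryFinTwo, coeff_X, ← add_zero (single 0 1), ← Finsupp.single_zero 1]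
  simp only [single_zero_add_single_one_inj, PowerSeries.coeff_X]
  split_ifs <;> simp_all [PowerSeries.coeff_one]

end MvPowerSeries

theorem eq_of_sq_eq_sq_of_map_eq_one {R S : Type*} [CommRing R] [NoZeroDivisors R] [CommRing S]
    [NeZero (2 : S)] (f : R →+* S) {a b : R} (h : a ^ 2 = b ^ 2) (ha : f a = 1) (hb : f b = 1) :
    a = b := by
  refine (sq_eq_sq_iff_eq_or_eq_neg.1 h).resolve_right fun hab => NeZero.ne (2 : S) ?_
  have h1 := congrArg f hab
  rw [map_neg, ha, hb] at h1
  linear_combination h1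

open PowerSeries

theorem curryFinTwo_Eexp (j : ℕ) :
    MvPowerSeries.curryFinTwo (Eexp j) = C (rescale (-(j : ℚ)) (exp ℚ)) := by
  ext n k
  rw [MvPowerSeries.coeff_coeff_curryFinTwo, coeff_C]
  show Eexp j _ = _
  rcases n with _ | n <;> simp [Eexp, coeff_rescale, div_eq_mul_inv]

def sinhSqHalf : ℚ⟦X⟧ := C 4⁻¹ * (rescale 1 (exp ℚ) + rescale (-1) (exp ℚ) - 2)

theorem constantCoeff_sinhSqHalf : constantCoeff sinhSqHalf = 0 := by
  simp [sinhSqHalf, map_ofNat]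
  norm_num

theorem rescale_neg_one_sinhSqHalf : rescale (-1) sinhSqHalf = sinhSqHalf := by
  simp [sinhSqHalf, rescale_rescale, map_ofNat, add_comm]

theorem rescale_neg_one_exp_sq : rescale (-1 : ℚ) (exp ℚ) ^ 2 = rescale (-2) (exp ℚ) := by
  rw [rescale_exp_pow]; norm_num

theorem two_mul_one_add_two_mul_sinhSqHalf_mul :
    2 * (1 + 2 * sinhSqHalf) * rescale (-1) (exp ℚ) = 1 + rescale (-2) (exp ℚ) := by
  have h4 : C 4⁻¹ * (4 : ℚ⟦X⟧) = 1 := by rw [← map_ofNat C, ← map_mul]; norm_num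
  have hinv : rescale 1 (exp ℚ) * rescale (-1) (exp ℚ) = 1 := by
    rw [exp_mul_exp_eq_exp_add]; simp
  rw [sinhSqHalf]
  linear_combination (rescale 1 (exp ℚ) * rescale (-1) (exp ℚ) + rescale (-1) (exp ℚ) ^ 2 -
    2 * rescale (-1) (exp ℚ)) * h4 + hinv + rescale_neg_one_exp_sq

/-- `(1 + t) G(t)` with `t = u e^{-z}` and `G` the Legendre generating function at `cosh z`. -/
def explicitSolution : ℚ⟦X⟧⟦X⟧ :=
  (1 + X * C (rescale (-1) (exp ℚ))) *
    rescale (rescale (-1) (exp ℚ)) (shiftedLegendreGenFun (-sinhSqHalf))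

theorem explicitSolution_sq_mul :
    explicitSolution ^ 2 * (1 - X) * (1 - X * C (rescale (-2) (exp ℚ))) =
      (1 + X * C (rescale (-1) (exp ℚ))) ^ 2 := by
  have hM : (1 - X) * (1 - X * C (rescale (-2) (exp ℚ))) = rescale (rescale (-1) (exp ℚ))
      (1 - 2 * C (1 - 2 * -sinhSqHalf) * X + X ^ 2) := by
    have h1 : 2 * (1 + 2 * C sinhSqHalf) * C (rescale (-1 : ℚ) (exp ℚ)) =
        1 + C (rescale (-2) (exp ℚ)) := by
      simpa [map_ofNat] using congrArg C two_mul_one_add_two_mul_sinhSqHalf_mul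
    have h2 : C (rescale (-1 : ℚ) (exp ℚ)) ^ 2 = C (rescale (-2) (exp ℚ)) := by
      rw [← map_pow, rescale_neg_one_exp_sq]
    simp only [map_add, map_sub, map_mul, map_pow, map_one, map_ofNat, map_neg, rescale_X,
      rescale_C]
    linear_combination X * h1 - X ^ 2 * h2
  have : IsAddTorsionFree ℚ⟦X⟧ := .of_module_rat _
  rw [mul_assoc, hM, explicitSolution, mul_pow, mul_assoc, ← map_pow, ← map_mul,
    shiftedLegendreGenFun_sq_mul, map_one, mul_one]

theorem curryFinTwo_eq_explicitSolution (F : MvPowerSeries (Fin 2) ℚ)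
    (hconst : MvPowerSeries.constantCoeff F = 1)
    (heq : F ^ 2 * (1 - MvPowerSeries.X 0) * (1 - MvPowerSeries.X 0 * Eexp 2) =
      (1 + MvPowerSeries.X 0 * Eexp 1) ^ 2) :
    MvPowerSeries.curryFinTwo F = explicitSolution := by
  have hs := congrArg MvPowerSeries.curryFinTwo heq
  simp only [map_mul, map_pow, map_sub, map_add, map_one, MvPowerSeries.curryFinTwo_X_zero,
    curryFinTwo_Eexp, Nat.cast_one, Nat.cast_ofNat] at hs
  have hunit : IsUnit ((1 - X) * (1 - X * C (rescale (-2 : ℚ) (exp ℚ)))) := by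
    simp [isUnit_iff_constantCoeff]
  refine eq_of_sq_eq_sq_of_map_eq_one (constantCoeff.comp constantCoeff)
    (hunit.mul_right_cancel ?_) ?_ ?_
  · rw [← mul_assoc, ← mul_assoc, hs, explicitSolution_sq_mul]
  · simpa [hconst] using MvPowerSeries.coeff_coeff_curryFinTwo F 0 0
  · simp [explicitSolution]

theorem coeff_zero_explicitSolution : coeff 0 explicitSolution = 1 := by
  rw [coeff_zero_eq_constantCoeff_apply]
  simp [explicitSolution]

theorem coeff_succ_explicitSolution (n : ℕ) :
    coeff (n + 1) explicitSolution = rescale (-(n + 1 : ℚ)) (exp ℚ) *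
      (coeff (n + 1) (shiftedLegendreGenFun (-sinhSqHalf)) +
        coeff n (shiftedLegendreGenFun (-sinhSqHalf))) := by
  rw [explicitSolution, add_mul, one_mul, mul_assoc, map_add, coeff_succ_X_mul, coeff_C_mul,
    coeff_rescale, coeff_rescale, ← mul_assoc, ← pow_succ' (rescale (-1 : ℚ) (exp ℚ)),
    rescale_exp_pow, mul_add, mul_neg_one, Nat.cast_succ]

/-- `P̃ₙ(x)` with the degree `n` kept as the polynomial variable. -/
def shiftedLegendrePolySeries (x : ℚ⟦X⟧) : (Polynomial ℚ)⟦X⟧ :=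
  mk fun i =>
    ∑ j ∈ Finset.range (i + 1), Polynomial.C (coeff i (x ^ j)) * Polynomial.legendreCoeff j

theorem map_eval_natCast_shiftedLegendrePolySeries {x : ℚ⟦X⟧} (hx : constantCoeff x = 0)
    (n : ℕ) :
    map (Polynomial.evalRingHom (n : ℚ)) (shiftedLegendrePolySeries x) =
      coeff n (shiftedLegendreGenFun x) := by
  ext i
  rw [coeff_map, shiftedLegendrePolySeries, coeff_mk, map_sum, shiftedLegendreGenFun, coeff_mk,
    RingHom.ext_int (Int.castRingHom ℚ⟦X⟧) (C.comp (Int.castRingHom ℚ)), coeff_eval₂_eq_sum _ _ hx]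
  refine Finset.sum_congr rfl fun j _ => ?_
  rw [Polynomial.coe_evalRingHom, Polynomial.eval_mul, Polynomial.eval_C,
    Polynomial.legendreCoeff_eval_natCast, eq_intCast, mul_comm]

theorem map_eval_neg_one_sub_shiftedLegendrePolySeries (x : ℚ⟦X⟧) (y : ℚ) :
    map (Polynomial.evalRingHom (-1 - y)) (shiftedLegendrePolySeries x) =
      map (Polynomial.evalRingHom y) (shiftedLegendrePolySeries x) := by
  ext i
  simp [shiftedLegendrePolySeries, Polynomial.legendreCoeff_eval_neg_one_sub]

theorem rescale_map_eval_shiftedLegendrePolySeries (x : ℚ⟦X⟧) (a y : ℚ) :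
    rescale a (map (Polynomial.evalRingHom y) (shiftedLegendrePolySeries x)) =
      map (Polynomial.evalRingHom y) (shiftedLegendrePolySeries (rescale a x)) := by
  ext i
  simp [shiftedLegendrePolySeries, coeff_rescale, ← map_pow, Finset.mul_sum, mul_assoc]

/-- `e^{-nz} (P̃ₙ(x) + P̃ₙ₋₁(x))` with `n` kept as the polynomial variable. -/
def coeffInterpolant (x : ℚ⟦X⟧) : (Polynomial ℚ)⟦X⟧ :=
  rescale (-Polynomial.X) (exp (Polynomial ℚ)) *
    (shiftedLegendrePolySeries x +
      map (Polynomial.compRingHom (Polynomial.X - 1)) (shiftedLegendrePolySeries x))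

theorem map_eval_coeffInterpolant (x : ℚ⟦X⟧) (y : ℚ) :
    map (Polynomial.evalRingHom y) (coeffInterpolant x) = rescale (-y) (exp ℚ) *
      (map (Polynomial.evalRingHom y) (shiftedLegendrePolySeries x) +
        map (Polynomial.evalRingHom (y - 1)) (shiftedLegendrePolySeries x)) := by
  have hcomp : (Polynomial.evalRingHom y).comp (Polynomial.compRingHom (Polynomial.X - 1)) =
      Polynomial.evalRingHom (y - 1) :=
    RingHom.ext fun p => by simp [Polynomial.eval_comp]
  rw [coeffInterpolant, map_mul, map_add, ← rescale_map, map_exp, ← RingHom.comp_apply (map _),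
    ← map_comp, hcomp, map_neg, Polynomial.coe_evalRingHom, Polynomial.eval_X]

theorem eval_neg_coeff_coeffInterpolant {x : ℚ⟦X⟧} (hx : rescale (-1) x = x) (k : ℕ) (y : ℚ) :
    (coeff k (coeffInterpolant x)).eval (-y) =
      (-1) ^ k * (coeff k (coeffInterpolant x)).eval y := by
  have h : map (Polynomial.evalRingHom (-y)) (coeffInterpolant x) =
      rescale (-1) (map (Polynomial.evalRingHom y) (coeffInterpolant x)) := by
    rw [map_eval_coeffInterpolant, map_eval_coeffInterpolant, map_mul, map_add,
      rescale_map_eval_shiftedLegendrePolySeries, rescale_map_eval_shiftedLegendrePolySeries, hx,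
      rescale_rescale, ← map_eval_neg_one_sub_shiftedLegendrePolySeries _ y,
      ← map_eval_neg_one_sub_shiftedLegendrePolySeries _ (y - 1)]
    ring_nf
  simpa [coeff_map, coeff_rescale] using congrArg (coeff k) h

theorem eval_zero_coeff_coeffInterpolant {x : ℚ⟦X⟧} (hx : constantCoeff x = 0) {k : ℕ}
    (hk : k ≠ 0) : (coeff k (coeffInterpolant x)).eval 0 = 0 := by
  have h : map (Polynomial.evalRingHom 0) (coeffInterpolant x) = C 2 := by
    rw [map_eval_coeffInterpolant, zero_sub,
      ← map_eval_neg_one_sub_shiftedLegendrePolySeries _ (-1), sub_self, ← Nat.cast_zero,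
      map_eval_natCast_shiftedLegendrePolySeries hx]
    simp [rescale_zero, map_ofNat, one_add_one_eq_two]
  simpa [coeff_map, coeff_C, hk] using congrArg (coeff k) h

theorem coeff_succ_explicitSolution_eq_map_eval (n : ℕ) :
    coeff (n + 1) explicitSolution =
      map (Polynomial.evalRingHom (n + 1 : ℚ)) (coeffInterpolant (-sinhSqHalf)) := by
  have hx : constantCoeff (-sinhSqHalf) = 0 := by simp [constantCoeff_sinhSqHalf]
  rw [map_eval_coeffInterpolant, coeff_succ_explicitSolution, add_sub_cancel_right,
    ← Nat.cast_succ, map_eval_natCast_shiftedLegendrePolySeries hx,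
    map_eval_natCast_shiftedLegendrePolySeries hx]

/-- Let `F ∈ ℚ[[u, z]]` be the unique power series with constant term 1
satisfying `F²(1 - u)(1 - u·E₂) = (1 + u·E₁)²`.  Then for every `k ≥ 1` there is a
polynomial `Q_k ∈ ℚ[X]` such that the coefficient of `uⁿ z^k` in `F` equals `Q_k(n)` for
all `n ≥ 0`, `Q_k(-X) = (-1)^k Q_k(X)`, and `Q_k(0) = 0`. -/
theorem coeff_polynomiality
    (F : MvPowerSeries (Fin 2) ℚ)
    (hconst : MvPowerSeries.constantCoeff F = 1)
    (heq : F ^ 2 * (1 - MvPowerSeries.X 0) * (1 - MvPowerSeries.X 0 * Eexp 2) =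
      (1 + MvPowerSeries.X 0 * Eexp 1) ^ 2) :
    ∀ k : ℕ, 1 ≤ k → ∃ Q : Polynomial ℚ,
      (∀ n : ℕ,
        MvPowerSeries.coeff (Finsupp.single 0 n + Finsupp.single 1 k) F =
          Q.eval (n : ℚ)) ∧
      (∀ x : ℚ, Q.eval (-x) = (-1 : ℚ) ^ k * Q.eval x) ∧
      Q.eval 0 = 0 := by
  intro k hk
  have hQ0 := eval_zero_coeff_coeffInterpolant (x := -sinhSqHalf)
    (by simp [constantCoeff_sinhSqHalf]) (by omega : k ≠ 0)
  refine ⟨coeff k (coeffInterpolant (-sinhSqHalf)), fun n => ?_,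
    eval_neg_coeff_coeffInterpolant (by rw [map_neg, rescale_neg_one_sinhSqHalf]) k, hQ0⟩
  rw [← MvPowerSeries.coeff_coeff_curryFinTwo, curryFinTwo_eq_explicitSolution F hconst heq]
  rcases n with _ | n
  · rw [coeff_zero_explicitSolution, coeff_one, if_neg (by omega), Nat.cast_zero, hQ0]
  · rw [coeff_succ_explicitSolution_eq_map_eval, coeff_map, Polynomial.coe_evalRingHom,
      Nat.cast_succ]

end
end

section
/- Let n ≥ 1 be an integer, s ≥ 0, and let c₁, …, c_s, d₁, …, d_s be real numbers. Set C = Σ_{j=1}^s cⱼ, D = Σ_{j=1}^s dⱼ, and Ã = Σ_{1≤i<j≤s} cⱼ dᵢ. Define F : ℝ → ℝ by F(x) = (∏_{j=1}^{s} exp(cⱼ·(x + n(d₁ + ⋯ + d_{j−1})))) · exp((x + nD)²/(2n)). Then for every integer ℓ ≥ 0, n^ℓ · F^{(ℓ)}(0) = Σ_{i=0}^{⌊ℓ/2⌋} binom(ℓ, 2i) · (2i)!/(2^i i!) · n^{ℓ−i} · (C + D)^{ℓ−2i} · exp(nÃ) · exp(nD²/2), where F^{(ℓ)} denotes the ℓ-th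 derivative of F. -/
/-!
Collecting exponents, the function is `exp (nÃ + nD²/2) · exp (x²/(2n)) · exp ((C + D) x)`.
By the Leibniz rule its `ℓ`-th derivative at `0` pairs the derivatives `(C + D)ᵏ` of the last
factor with those of the Gaussian factor `g(y) = exp (σ y²/2)`, `σ = 1/n`, at `0`. Since
`g' = σ y g`, these satisfy `g⁽ᵏ⁺²⁾(0) = σ (k + 1) g⁽ᵏ⁾(0)`: they vanish in odd order and equal
`(2i - 1)‼ σⁱ = (2i)! / (2ⁱ i!) · σⁱ` in order `2i`.
-/

open Real Finset
open scoped Nat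

theorem Finset.sum_range_succ_eq_sum_range_div_two_succ {M : Type*} [AddCommMonoid M]
    (f : ℕ → M) (hf : ∀ i, f (2 * i + 1) = 0) (ℓ : ℕ) :
    ∑ k ∈ range (ℓ + 1), f k = ∑ i ∈ range (ℓ / 2 + 1), f (2 * i) := by
  induction ℓ with
  | zero => simp
  | succ ℓ ih =>
    rw [sum_range_succ, ih]
    obtain ⟨m, rfl | rfl⟩ := Nat.even_or_odd' ℓ
    · rw [hf, add_zero, Nat.mul_div_cancel_left _ two_pos, Nat.mul_add_div two_pos]
      simp
    · rw [show 2 * m + 1 + 1 = 2 * (m + 1) by ring, Nat.mul_add_div two_pos,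
        Nat.mul_div_cancel_left _ two_pos, sum_range_succ _ (m + 1)]
      simp

theorem Nat.factorial_two_mul_eq (i : ℕ) : (2 * i)! = 2 ^ i * i ! * (2 * i - 1)‼ := by
  rcases i with _ | i
  · rfl
  · rw [show 2 * (i + 1) - 1 = 2 * i + 1 by omega, ← Nat.doubleFactorial_two_mul,
      show 2 * (i + 1) = 2 * i + 1 + 1 by ring, Nat.factorial_eq_mul_doubleFactorial]

noncomputable def expHalfMulSq (σ y : ℝ) : ℝ := exp (σ * y ^ 2 / 2)

theorem contDiff_expHalfMulSq (σ : ℝ) {n : WithTop ℕ∞} : ContDiff ℝ n (expHalfMulSq σ) := by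
  unfold expHalfMulSq; fun_prop

theorem deriv_expHalfMulSq (σ : ℝ) :
    deriv (expHalfMulSq σ) = fun y => σ * (y * expHalfMulSq σ y) := by
  funext y
  have h := ((hasDerivAt_pow 2 y).const_mul σ |>.div_const 2).exp
  unfold expHalfMulSq
  rw [h.deriv]
  push_cast
  ring

theorem iteratedDeriv_expHalfMulSq_zero_add_two (σ : ℝ) (k : ℕ) :
    iteratedDeriv (k + 2) (expHalfMulSq σ) 0 =
      σ * (k + 1) * iteratedDeriv k (expHalfMulSq σ) 0 := by
  rw [iteratedDeriv_succ', deriv_expHalfMulSq, iteratedDeriv_const_mul_field,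
    iteratedDeriv_fun_mul (f := fun y => y) contDiff_id.contDiffAt
      (contDiff_expHalfMulSq σ).contDiffAt, sum_eq_single 1]
  · simp only [Nat.choose_one_right, Nat.cast_add, Nat.cast_one, iteratedDeriv_fun_id_zero,
      if_pos, mul_one, add_tsub_cancel_right]
    ring
  · intro i _ hi; simp [iteratedDeriv_fun_id_zero, hi]
  · simp

theorem iteratedDeriv_two_mul_expHalfMulSq_zero (σ : ℝ) (i : ℕ) :
    iteratedDeriv (2 * i) (expHalfMulSq σ) 0 = (2 * i - 1)‼ * σ ^ i := by
  induction i with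
  | zero => simp [expHalfMulSq]
  | succ i ih =>
    rw [show 2 * (i + 1) = 2 * i + 2 by ring, iteratedDeriv_expHalfMulSq_zero_add_two, ih,
      show 2 * i + 2 - 1 = 2 * i + 1 by omega, Nat.doubleFactorial_add_one]
    push_cast
    ring

theorem iteratedDeriv_two_mul_add_one_expHalfMulSq_zero (σ : ℝ) (i : ℕ) :
    iteratedDeriv (2 * i + 1) (expHalfMulSq σ) 0 = 0 := by
  induction i with
  | zero => simp [deriv_expHalfMulSq]
  | succ i ih =>
    rw [show 2 * (i + 1) + 1 = 2 * i + 1 + 2 by ring, iteratedDeriv_expHalfMulSq_zero_add_two,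
      ih, mul_zero]

theorem iteratedDeriv_expHalfMulSq_mul_exp_const_mul_zero (σ A : ℝ) (ℓ : ℕ) :
    iteratedDeriv ℓ (fun x => expHalfMulSq σ x * exp (A * x)) 0 =
      ∑ i ∈ range (ℓ / 2 + 1), (ℓ.choose (2 * i) * (2 * i - 1)‼ : ℝ) * σ ^ i * A ^ (ℓ - 2 * i) := by
  rw [iteratedDeriv_fun_mul (contDiff_expHalfMulSq σ).contDiffAt
      (by fun_prop : ContDiff ℝ ℓ fun x => exp (A * x)).contDiffAt,
    Finset.sum_range_succ_eq_sum_range_div_two_succ]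
  · refine sum_congr rfl fun i _ => ?_
    rw [iteratedDeriv_two_mul_expHalfMulSq_zero, iteratedDeriv_exp_const_mul]
    simp only [mul_zero, exp_zero, mul_one]
    ring
  · intro i; simp [iteratedDeriv_two_mul_add_one_expHalfMulSq_zero]

theorem prod_exp_mul_exp_sq_eq (ν : ℝ) (hν : ν ≠ 0) {s : ℕ} (c d : Fin s → ℝ) (x : ℝ) :
    (∏ j : Fin s, exp (c j * (x + ν * ∑ i ∈ univ.filter (· < j), d i))) *
        exp ((x + ν * ∑ j, d j) ^ 2 / (2 * ν)) =
      exp (ν * ∑ j : Fin s, ∑ i ∈ univ.filter (· < j), c j * d i) * exp (ν * (∑ j, d j) ^ 2 / 2) *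
        (expHalfMulSq ν⁻¹ x * exp ((∑ j, c j + ∑ j, d j) * x)) := by
  have hlin : ∑ j : Fin s, c j * (x + ν * ∑ i ∈ univ.filter (· < j), d i) =
      (∑ j, c j) * x + ν * ∑ j : Fin s, ∑ i ∈ univ.filter (· < j), c j * d i := by
    simp only [mul_add, sum_add_distrib, sum_mul, mul_sum, mul_left_comm (c _) ν]
  rw [← exp_sum, expHalfMulSq, ← exp_add, ← exp_add, ← exp_add, ← exp_add, hlin]
  congr 1
  field_simp
  ring

/-- The Fock-space vacuum expectation identity
`⟨0| αₙ^ℓ ∏ⱼ (e^{cⱼα₋ₙ} e^{dⱼαₙ}) e^{α₋ₙ²/2n} |0⟩`, realized in the one-mode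
representation where `α₋ₙ` is multiplication by `x` and `αₙ` is `n·d/dx`:
for `F(x) = (∏ⱼ exp(cⱼ(x + n(d₁ + ⋯ + d_{j-1})))) · exp((x + nD)²/(2n))` one has
`n^ℓ F^{(ℓ)}(0) = Σ_{i=0}^{⌊ℓ/2⌋} binom(ℓ,2i) (2i)!/(2^i i!) n^{ℓ-i} (C+D)^{ℓ-2i}
e^{nÃ} e^{nD²/2}`. -/
theorem fock_vacuum_expectation
    (n : ℕ) (hn : 1 ≤ n) (s : ℕ) (c d : Fin s → ℝ) (ℓ : ℕ) :
    (n : ℝ) ^ ℓ *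
      iteratedDeriv ℓ (fun x : ℝ =>
        (∏ j : Fin s,
          Real.exp (c j * (x + n * ∑ i ∈ Finset.univ.filter (· < j), d i))) *
        Real.exp ((x + n * ∑ j, d j) ^ 2 / (2 * n))) 0 =
    ∑ i ∈ Finset.range (ℓ / 2 + 1),
      (ℓ.choose (2 * i) : ℝ) *
      ((Nat.factorial (2 * i) : ℝ) / (2 ^ i * Nat.factorial i)) *
      (n : ℝ) ^ (ℓ - i) *
      (∑ j, c j + ∑ j, d j) ^ (ℓ - 2 * i) *
      Real.exp (n * ∑ j : Fin s, ∑ i ∈ Finset.univ.filter (· < j), c j * d i) *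
      Real.exp (n * (∑ j, d j) ^ 2 / 2) := by
  have hn0 : (n : ℝ) ≠ 0 := Nat.cast_ne_zero.mpr (by omega)
  simp_rw [prod_exp_mul_exp_sq_eq (n : ℝ) hn0 c d, iteratedDeriv_const_mul_field,
    iteratedDeriv_expHalfMulSq_mul_exp_const_mul_zero, mul_sum]
  refine sum_congr rfl fun i hi => ?_
  have hi : i ≤ ℓ := by rw [mem_range] at hi; omega
  rw [Nat.factorial_two_mul_eq, pow_sub₀ _ hn0 hi, inv_pow]
  push_cast
  field_simp
end

section
/- In ℚ[[q]] one has the identity [ζ⁰]( P^{(2)}(z) · P(2z) ) = (28/5)·G₆(q) − 64·G₄(q)·G₂(q). -/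
/-!
Only the terms of `P''(z) · P(2z)` with winding numbers `(2v, v)` and opposite powers of `ζ`
reach the constant term, and for `N = v e` exactly `e` pairs of `q`-exponents contribute, so the
`q^N`-coefficient of the left side is `8 N σ₃(N)`. Writing `G₂ₖ` as its constant term plus
`Σ σ₂ₖ₋₁(n) qⁿ`, the right side comes down to the convolution `Σ_{i+j=N} σ₃(i) σ₁(j)`, which is
`Σ a³ b` over the positive solutions of `a x + b y = N`. Liouville's elementary method evaluates
it: comparing `Σ f(a + b)` with `Σ f(a - b)` for `f(m) = m⁴`, by means of the symmetry
`(a, b, x, y) ↦ (b, a, y, x)` and the shear `(a, b, x, y) ↦ (a - b, b, x, x + y)`, gives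
`Σ a³ b = (21 σ₅(N) + 10 σ₃(N) - 30 N σ₃(N) - σ₁(N)) / 240`.
-/

open scoped BigOperators

noncomputable section

/-- The `q^N`-coefficient of the constant term (in `ζ`) of a product of `r` propagator
factors.  The `i`-th factor is `Σ_{w} w^(mᵢ+1) (ζ^(tᵢ w) Σ_{h≥0} q^(wh) + ζ^(-tᵢ w)
Σ_{h≥1} q^(wh))`, the sum being over `w ≥ 1` with `allowed i w`. -/
def ctCoeff (r : ℕ) (m t : Fin r → ℕ) (allowed : Fin r → ℕ → Prop) (N : ℕ) : ℚ :=
  ∑ᶠ x ∈ {x : (Fin r → ℕ) × (Fin r → ℕ) × (Fin r → Bool) |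
      (∀ i, 1 ≤ x.1 i ∧ allowed i (x.1 i) ∧ (x.2.2 i = false → 1 ≤ x.2.1 i)) ∧
      (∑ i, (if x.2.2 i then (1 : ℤ) else -1) * (t i : ℤ) * (x.1 i : ℤ)) = 0 ∧
      (∑ i, x.1 i * x.2.1 i) = N},
    ∏ i, (x.1 i : ℚ) ^ (m i + 1)

/-- The constant term `[ζ⁰](F₁ ⋯ F_r)` as a power series in `q`. -/
def ctSeries (r : ℕ) (m t : Fin r → ℕ) (allowed : Fin r → ℕ → Prop) : PowerSeries ℚ :=
  PowerSeries.mk (ctCoeff r m t allowed)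

/-- The Eisenstein series `G_(2k)(q) = -B_(2k)/(4k) + Σ_(n≥1) σ_(2k-1)(n) qⁿ`. -/
def Eis (k : ℕ) : PowerSeries ℚ :=
  PowerSeries.mk fun n =>
    if n = 0 then -(bernoulli (2 * k)) / (4 * k)
    else ∑ e ∈ n.divisors, (e : ℚ) ^ (2 * k - 1)

/-- Substitution `q ↦ q^j` in a power series. -/
def psubst (j : ℕ) (F : PowerSeries ℚ) : PowerSeries ℚ :=
  PowerSeries.mk fun n => if j ∣ n then PowerSeries.coeff (n / j) F else 0

open Finset
open scoped ArithmeticFunction.sigma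

section LinearRepresentations

variable {M : Type*}

def linReps (n : ℕ) : Finset ((ℕ × ℕ) × ℕ × ℕ) :=
  ((Icc 1 n ×ˢ Icc 1 n) ×ˢ (Icc 1 n ×ˢ Icc 1 n)).filter
    fun p => p.1.1 * p.2.1 + p.1.2 * p.2.2 = n

theorem mem_linReps {n a b x y : ℕ} :
    ((a, b), (x, y)) ∈ linReps n ↔ (0 < a ∧ 0 < b ∧ 0 < x ∧ 0 < y) ∧ a * x + b * y = n := by
  simp only [linReps, mem_filter, mem_product, mem_Icc]
  constructor
  · rintro ⟨⟨⟨⟨ha, -⟩, hb, -⟩, ⟨hx, -⟩, hy, -⟩, h⟩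
    exact ⟨⟨ha, hb, hx, hy⟩, h⟩
  · rintro ⟨⟨ha, hb, hx, hy⟩, h⟩
    have : a ≤ a * x ∧ x ≤ a * x ∧ b ≤ b * y ∧ y ≤ b * y :=
      ⟨Nat.le_mul_of_pos_right a hx, Nat.le_mul_of_pos_left x ha,
        Nat.le_mul_of_pos_right b hy, Nat.le_mul_of_pos_left y hb⟩
    exact ⟨⟨⟨⟨ha, by omega⟩, hb, by omega⟩, ⟨hx, by omega⟩, hy, by omega⟩, h⟩

theorem sum_linReps_filter_comp_swap [AddCommMonoid M] (n : ℕ)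
    (P : (ℕ × ℕ) × ℕ × ℕ → Prop) [DecidablePred P] (g : (ℕ × ℕ) × ℕ × ℕ → M) :
    ∑ p ∈ linReps n with P (Prod.map Prod.swap Prod.swap p), g (Prod.map Prod.swap Prod.swap p) =
      ∑ p ∈ linReps n with P p, g p := by
  refine sum_nbij' (Prod.map Prod.swap Prod.swap) (Prod.map Prod.swap Prod.swap)
    ?_ ?_ (fun _ _ => rfl) (fun _ _ => rfl) (fun _ _ => rfl) <;>
  · rintro ⟨⟨a, b⟩, x, y⟩ hp
    simp only [mem_filter, mem_linReps, Prod.map, Prod.swap] at hp ⊢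
    obtain ⟨⟨⟨ha, hb, hx, hy⟩, h⟩, hP⟩ := hp
    exact ⟨⟨⟨hb, ha, hy, hx⟩, by rw [← h, add_comm]⟩, hP⟩

theorem sum_linReps_comp_swap [AddCommMonoid M] (n : ℕ) (g : (ℕ × ℕ) × ℕ × ℕ → M) :
    ∑ p ∈ linReps n, g (Prod.map Prod.swap Prod.swap p) = ∑ p ∈ linReps n, g p := by
  simpa using sum_linReps_filter_comp_swap n (fun _ => True) g

theorem sum_linReps_eq_sum_lt_add_sum_eq [AddCommMonoid M] (n : ℕ)
    (c d : (ℕ × ℕ) × ℕ × ℕ → ℕ) (hcd : ∀ p, c (Prod.map Prod.swap Prod.swap p) = d p)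
    (g : (ℕ × ℕ) × ℕ × ℕ → M) :
    ∑ p ∈ linReps n, g p =
      ∑ p ∈ linReps n with c p < d p, (g p + g (Prod.map Prod.swap Prod.swap p)) +
        ∑ p ∈ linReps n with c p = d p, g p := by
  have hdc : ∀ p, d (Prod.map Prod.swap Prod.swap p) = c p := fun p => by
    rw [← hcd, Prod.map_map, Prod.swap_swap_eq, Prod.map_id, id]
  have hswap := sum_linReps_filter_comp_swap n (fun p => d p < c p) g
  simp only [hcd, hdc] at hswap
  rw [sum_add_distrib, hswap, ← sum_filter_add_sum_filter_not _ (fun p => c p < d p),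
    ← sum_filter_add_sum_filter_not (filter (fun p => ¬c p < d p) _) (fun p => d p < c p),
    filter_filter, filter_filter, add_assoc]
  congr 2 <;> exact sum_congr (filter_congr fun p _ => by omega) fun _ _ => rfl

/-- Liouville's shear `(a, b, x, y) ↦ (a - b, b, x, x + y)` maps the solutions with `b < a`
onto those with `x < y`. -/
theorem sum_linReps_filter_lt_shear [AddCommMonoid M] (n : ℕ) (g : ℕ → ℕ → M) :
    ∑ p ∈ linReps n with p.2.1 < p.2.2, g p.1.1 p.1.2 =
      ∑ p ∈ linReps n with p.1.2 < p.1.1, g (p.1.1 - p.1.2) p.1.2 := by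
  refine sum_nbij' (fun p => ((p.1.1 + p.1.2, p.1.2), (p.2.1, p.2.2 - p.2.1)))
    (fun p => ((p.1.1 - p.1.2, p.1.2), (p.2.1, p.2.2 + p.2.1))) ?_ ?_ ?_ ?_ ?_
  · rintro ⟨⟨a, b⟩, x, y⟩ hp
    simp only [mem_filter, mem_linReps] at hp ⊢
    obtain ⟨⟨⟨ha, hb, hx, hy⟩, h⟩, hxy⟩ := hp
    obtain ⟨t, rfl⟩ := Nat.exists_eq_add_of_lt hxy
    refine ⟨⟨⟨by omega, hb, hx, by omega⟩, ?_⟩, by omega⟩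
    rw [← h, show x + t + 1 - x = t + 1 by omega]
    ring
  · rintro ⟨⟨a, b⟩, x, y⟩ hp
    simp only [mem_filter, mem_linReps] at hp ⊢
    obtain ⟨⟨⟨ha, hb, hx, hy⟩, h⟩, hba⟩ := hp
    obtain ⟨t, rfl⟩ := Nat.exists_eq_add_of_lt hba
    refine ⟨⟨⟨by omega, hb, hx, by omega⟩, ?_⟩, by omega⟩
    rw [← h, show b + t + 1 - b = t + 1 by omega]
    ring
  · rintro ⟨⟨a, b⟩, x, y⟩ hp
    simp only [mem_filter] at hp
    simp only [Prod.mk.injEq, and_true, true_and]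
    omega
  · rintro ⟨⟨a, b⟩, x, y⟩ hp
    simp only [mem_filter] at hp
    simp only [Prod.mk.injEq, and_true, true_and]
    omega
  · rintro ⟨⟨a, b⟩, x, y⟩ -
    simp

theorem sum_linReps_filter_snd_eq [AddCommMonoid M] (n : ℕ) (g : ℕ → ℕ → M) :
    ∑ p ∈ linReps n with p.2.1 = p.2.2, g p.1.1 p.1.2 =
      ∑ d ∈ n.divisors, ∑ a ∈ Ico 1 d, g a (d - a) := by
  rw [sum_sigma']
  refine sum_nbij' (fun p => ⟨p.1.1 + p.1.2, p.1.1⟩)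
    (fun q => ((q.2, q.1 - q.2), (n / q.1, n / q.1))) ?_ ?_ ?_ ?_ ?_
  · rintro ⟨⟨a, b⟩, x, y⟩ hp
    simp only [mem_filter, mem_linReps] at hp
    obtain ⟨⟨⟨ha, hb, hx, -⟩, h⟩, rfl⟩ := hp
    simp only [mem_sigma, Nat.mem_divisors, mem_Ico]
    exact ⟨⟨⟨x, by rw [← h]; ring⟩, by rw [← h]; positivity⟩, ha, by omega⟩
  · rintro ⟨d, a⟩ hq
    simp only [mem_sigma, Nat.mem_divisors, mem_Ico] at hq
    obtain ⟨⟨⟨e, rfl⟩, hn⟩, ha, had⟩ := hq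
    have he : 0 < e := Nat.pos_of_ne_zero (right_ne_zero_of_mul hn)
    simp only [mem_filter, mem_linReps, Nat.mul_div_cancel_left e (by omega : 0 < d)]
    refine ⟨⟨⟨ha, by omega, he, he⟩, ?_⟩, trivial⟩
    rw [← add_mul, Nat.add_sub_cancel' had.le]
  · rintro ⟨⟨a, b⟩, x, y⟩ hp
    simp only [mem_filter, mem_linReps] at hp
    obtain ⟨⟨⟨ha, -⟩, h⟩, rfl⟩ := hp
    have hx : n / (a + b) = x := by
      rw [← h, ← add_mul, Nat.mul_div_cancel_left x (by omega)]
    simp [hx]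
  · rintro ⟨d, a⟩ hq
    simp only [mem_sigma, mem_Ico] at hq
    simp [Nat.add_sub_cancel' hq.2.2.le]
  · rintro ⟨⟨a, b⟩, x, y⟩ -
    simp

theorem sum_linReps_filter_fst_eq [AddCommMonoid M] (n : ℕ) (f : ℕ → M) :
    ∑ p ∈ linReps n with p.1.2 = p.1.1, f p.1.1 = ∑ d ∈ n.divisors, (n / d - 1) • f d := by
  simp_rw [← Nat.card_Ico 1 (n / _), ← sum_const]
  rw [sum_sigma']
  refine sum_nbij' (fun p => ⟨p.1.1, p.2.1⟩)
    (fun q => ((q.1, q.1), (q.2, n / q.1 - q.2))) ?_ ?_ ?_ ?_ ?_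
  · rintro ⟨⟨a, b⟩, x, y⟩ hp
    simp only [mem_filter, mem_linReps] at hp
    obtain ⟨⟨⟨ha, -, hx, hy⟩, h⟩, hba⟩ := hp
    subst b
    have hxy : n / a = x + y := by rw [← h, ← mul_add, Nat.mul_div_cancel_left _ ha]
    simp only [mem_sigma, Nat.mem_divisors, mem_Ico, hxy]
    exact ⟨⟨⟨x + y, by rw [← h]; ring⟩, by rw [← h]; positivity⟩, hx, by omega⟩
  · rintro ⟨d, x⟩ hq
    simp only [mem_sigma, Nat.mem_divisors, mem_Ico] at hq
    obtain ⟨⟨⟨e, rfl⟩, hn⟩, hx, hxe⟩ := hq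
    have hd : 0 < d := Nat.pos_of_ne_zero (left_ne_zero_of_mul hn)
    simp only [mem_filter, mem_linReps, Nat.mul_div_cancel_left e hd] at hxe ⊢
    refine ⟨⟨⟨hd, hd, hx, by omega⟩, ?_⟩, trivial⟩
    rw [← mul_add, Nat.add_sub_cancel' hxe.le]
  · rintro ⟨⟨a, b⟩, x, y⟩ hp
    simp only [mem_filter, mem_linReps] at hp
    obtain ⟨⟨⟨ha, -⟩, h⟩, hba⟩ := hp
    subst b
    have hxy : n / a = x + y := by rw [← h, ← mul_add, Nat.mul_div_cancel_left _ ha]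
    simp [hxy]
  · rintro ⟨d, x⟩ -
    simp
  · rintro ⟨⟨a, b⟩, x, y⟩ -
    rfl

theorem sum_linReps_filter_lt_sub_add_sum_divisors [AddCommGroup M] (n : ℕ) (f : ℕ → M) :
    ∑ p ∈ linReps n with p.1.2 < p.1.1, f (p.1.1 - p.1.2) +
        ∑ d ∈ n.divisors, ∑ a ∈ Ico 1 d, f a =
      ∑ p ∈ linReps n with p.1.2 < p.1.1, f p.1.1 + ∑ d ∈ n.divisors, (n / d - 1) • f d := by
  have hxy := sum_linReps_eq_sum_lt_add_sum_eq n (·.2.1) (·.2.2) (fun _ => rfl) (f ·.1.1)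
  have hab := sum_linReps_eq_sum_lt_add_sum_eq n (·.1.2) (·.1.1) (fun _ => rfl) (f ·.1.1)
  simp only [Prod.map_fst, Prod.fst_swap] at hxy hab
  rw [sum_linReps_filter_lt_shear n (fun a b => f a + f b),
    sum_linReps_filter_snd_eq n (fun a _ => f a),
    sum_add_distrib] at hxy
  rw [sum_linReps_filter_fst_eq, sum_add_distrib, hxy] at hab
  calc _ = ∑ p ∈ linReps n with p.1.2 < p.1.1, f (p.1.1 - p.1.2) +
        ∑ p ∈ linReps n with p.1.2 < p.1.1, f p.1.2 + ∑ d ∈ n.divisors, ∑ a ∈ Ico 1 d, f a -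
        ∑ p ∈ linReps n with p.1.2 < p.1.1, f p.1.2 := by abel
    _ = _ := by rw [hab]; abel

theorem sum_linReps_add [AddCommMonoid M] (n : ℕ) (f : ℕ → M) :
    ∑ p ∈ linReps n, f (p.1.1 + p.1.2) =
      2 • ∑ p ∈ linReps n with p.1.2 < p.1.1, f p.1.1 + ∑ d ∈ n.divisors, (d - 1) • f d := by
  rw [sum_linReps_eq_sum_lt_add_sum_eq n (·.2.1) (·.2.2) (fun _ => rfl)]
  simp only [Prod.map_fst, Prod.fst_swap, Prod.snd_swap]
  rw [sum_linReps_filter_lt_shear n (fun a b => f (a + b) + f (b + a)),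
    sum_linReps_filter_snd_eq n (fun a b => f (a + b)), ← sum_nsmul]
  congr 1
  · refine sum_congr rfl fun p hp => ?_
    rw [mem_filter] at hp
    rw [Nat.sub_add_cancel hp.2.le, Nat.add_sub_cancel' hp.2.le, two_nsmul]
  · refine sum_congr rfl fun d _ => ?_
    rw [← Nat.card_Ico 1 d, ← sum_const]
    exact sum_congr rfl fun a ha => by rw [Nat.add_sub_cancel' (mem_Ico.1 ha).2.le]

theorem sum_antidiagonal_sum_divisors_mul_sum_divisors {R : Type*} [CommSemiring R]
    (f g : ℕ → R) (n : ℕ) :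
    ∑ ij ∈ antidiagonal n, (∑ d ∈ ij.1.divisors, f d) * ∑ d ∈ ij.2.divisors, g d =
      ∑ p ∈ linReps n, f p.1.1 * g p.1.2 := by
  simp only [← Nat.sum_divisorsAntidiagonal (fun d _ => f d),
    ← Nat.sum_divisorsAntidiagonal (fun d _ => g d), sum_mul_sum, ← sum_product']
  rw [sum_sigma']
  refine sum_nbij' (fun q => ((q.2.1.1, q.2.2.1), (q.2.1.2, q.2.2.2)))
    (fun p => ⟨(p.1.1 * p.2.1, p.1.2 * p.2.2), ((p.1.1, p.2.1), (p.1.2, p.2.2))⟩)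
    ?_ ?_ ?_ ?_ fun _ _ => rfl
  · rintro ⟨⟨i, j⟩, ⟨a, x⟩, ⟨b, y⟩⟩ hq
    simp only [mem_sigma, mem_product, HasAntidiagonal.mem_antidiagonal,
      Nat.mem_divisorsAntidiagonal] at hq
    obtain ⟨hij, ⟨rfl, hi⟩, rfl, hj⟩ := hq
    simp only [mem_linReps]
    refine ⟨?_, hij⟩
    simp only [Nat.pos_iff_ne_zero]
    exact ⟨left_ne_zero_of_mul hi, left_ne_zero_of_mul hj, right_ne_zero_of_mul hi,
      right_ne_zero_of_mul hj⟩
  · rintro ⟨⟨a, b⟩, x, y⟩ hp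
    obtain ⟨⟨ha, hb, hx, hy⟩, h⟩ := mem_linReps.1 hp
    simp only [mem_sigma, mem_product, HasAntidiagonal.mem_antidiagonal,
      Nat.mem_divisorsAntidiagonal]
    exact ⟨h, ⟨trivial, by positivity⟩, trivial, by positivity⟩
  · rintro ⟨⟨i, j⟩, ⟨a, x⟩, ⟨b, y⟩⟩ hq
    simp only [mem_sigma, mem_product, Nat.mem_divisorsAntidiagonal] at hq
    obtain ⟨-, ⟨rfl, -⟩, rfl, -⟩ := hq
    rfl
  · rintro ⟨⟨a, b⟩, x, y⟩ -
    rfl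

end LinearRepresentations

theorem sum_Ico_one_pow_four (d : ℕ) :
    ∑ a ∈ Ico 1 d, (a : ℚ) ^ 4 = (6 * d ^ 5 - 15 * d ^ 4 + 10 * d ^ 3 - d) / 30 := by
  induction d with
  | zero => simp
  | succ d ih =>
    rcases Nat.eq_zero_or_pos d with rfl | hd
    · norm_num
    · rw [sum_Ico_succ_top hd, ih]
      push_cast
      ring

theorem sixteen_mul_sum_linReps_pow_three_mul (n : ℕ) :
    16 * ∑ p ∈ linReps n, (p.1.1 : ℚ) ^ 3 * p.1.2 =
      ∑ d ∈ n.divisors, (d - 1) • (d : ℚ) ^ 4 +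
        2 * ∑ d ∈ n.divisors, ∑ a ∈ Ico 1 d, (a : ℚ) ^ 4 -
        2 * ∑ d ∈ n.divisors, (n / d - 1) • (d : ℚ) ^ 4 := by
  have hdiff := sum_linReps_filter_lt_sub_add_sum_divisors n fun m => (m : ℚ) ^ 4
  have hplus := sum_linReps_add n fun m => (m : ℚ) ^ 4
  have hminus : ∑ p ∈ linReps n, ((p.1.1 : ℚ) - p.1.2) ^ 4 =
      2 * ∑ p ∈ linReps n with p.1.2 < p.1.1, ((p.1.1 - p.1.2 : ℕ) : ℚ) ^ 4 := by
    have hdiag : ∑ p ∈ linReps n with p.1.2 = p.1.1, ((p.1.1 : ℚ) - p.1.2) ^ 4 = 0 :=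
      sum_eq_zero fun p hp => by simp [(mem_filter.1 hp).2]
    rw [sum_linReps_eq_sum_lt_add_sum_eq n (·.1.2) (·.1.1) (fun _ => rfl), hdiag, add_zero,
      mul_sum]
    refine sum_congr rfl fun p hp => ?_
    simp only [Nat.cast_sub (mem_filter.1 hp).2.le, Prod.map_fst, Prod.fst_swap, Prod.snd_swap]
    ring
  have hsymm := sum_linReps_comp_swap n fun p => (p.1.1 : ℚ) ^ 3 * p.1.2
  simp only [Prod.map_fst, Prod.fst_swap, Prod.snd_swap] at hsymm
  have hpoly : ∀ p ∈ linReps n, ((p.1.1 + p.1.2 : ℕ) : ℚ) ^ 4 - ((p.1.1 : ℚ) - p.1.2) ^ 4 =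
      8 * ((p.1.1 : ℚ) ^ 3 * p.1.2) + 8 * ((p.1.2 : ℚ) ^ 3 * p.1.1) := fun p _ => by
    push_cast
    ring
  have hfourth : 16 * ∑ p ∈ linReps n, (p.1.1 : ℚ) ^ 3 * p.1.2 =
      ∑ p ∈ linReps n, ((p.1.1 + p.1.2 : ℕ) : ℚ) ^ 4 -
        ∑ p ∈ linReps n, ((p.1.1 : ℚ) - p.1.2) ^ 4 := by
    rw [← sum_sub_distrib, sum_congr rfl hpoly, sum_add_distrib, ← mul_sum, ← mul_sum, hsymm]
    ring
  rw [hfourth, hplus, hminus, two_nsmul]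
  linear_combination (-2 : ℚ) * hdiff

theorem sum_linReps_pow_three_mul (n : ℕ) :
    ∑ p ∈ linReps n, (p.1.1 : ℚ) ^ 3 * p.1.2 =
      (21 * σ 5 n + 10 * σ 3 n - 30 * n * σ 3 n - σ 1 n) / 240 := by
  have h16 := sixteen_mul_sum_linReps_pow_three_mul n
  have hP : ∑ d ∈ n.divisors, ∑ a ∈ Ico 1 d, (a : ℚ) ^ 4 =
      (6 * σ 5 n - 15 * σ 4 n + 10 * σ 3 n - σ 1 n) / 30 := by
    simp only [sum_Ico_one_pow_four, ArithmeticFunction.sigma_apply, Nat.cast_sum, Nat.cast_pow,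
      mul_sum, ← sum_sub_distrib, ← sum_add_distrib, sum_div, pow_one]
  have hQ : ∑ d ∈ n.divisors, (d - 1) • (d : ℚ) ^ 4 = σ 5 n - σ 4 n := by
    simp only [ArithmeticFunction.sigma_apply, Nat.cast_sum, Nat.cast_pow, ← sum_sub_distrib]
    refine sum_congr rfl fun d hd => ?_
    rw [nsmul_eq_mul, Nat.cast_sub (Nat.pos_of_mem_divisors hd)]
    ring
  have hR : ∑ d ∈ n.divisors, (n / d - 1) • (d : ℚ) ^ 4 = n * σ 3 n - σ 4 n := by
    simp only [ArithmeticFunction.sigma_apply, Nat.cast_sum, Nat.cast_pow, mul_sum,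
      ← sum_sub_distrib]
    refine sum_congr rfl fun d hd => ?_
    obtain ⟨⟨e, rfl⟩, hn⟩ := Nat.mem_divisors.1 hd
    rw [Nat.mul_div_cancel_left e (Nat.pos_of_mem_divisors hd), nsmul_eq_mul,
      Nat.cast_sub (Nat.pos_of_ne_zero (right_ne_zero_of_mul hn))]
    push_cast
    ring
  rw [hP, hQ, hR] at h16
  linear_combination h16 / 16

theorem sum_antidiagonal_sigma_three_mul_sigma_one (n : ℕ) :
    ∑ ij ∈ antidiagonal n, (σ 3 ij.1 : ℚ) * σ 1 ij.2 =
      (21 * σ 5 n + 10 * σ 3 n - 30 * n * σ 3 n - σ 1 n) / 240 := by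
  rw [← sum_linReps_pow_three_mul,
    ← sum_antidiagonal_sum_divisors_mul_sum_divisors (fun d => (d : ℚ) ^ 3) (fun d => (d : ℚ))]
  push_cast [ArithmeticFunction.sigma_apply, pow_one]
  rfl

/-- For `q = ((v, e), j)`, the `j`-th of the `e` terms of `P''(z) P(2z)` with winding numbers
`(2v, v)` and `q`-exponent `v e`; the positive power of `ζ` sits in the first factor when
`2 j < e` and in the second one otherwise. -/
def ctParam (q : (_ : ℕ × ℕ) × ℕ) : (Fin 2 → ℕ) × (Fin 2 → ℕ) × (Fin 2 → Bool) :=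
  if 2 * q.2 < q.1.2 then (![2 * q.1.1, q.1.1], ![q.2, q.1.2 - 2 * q.2], ![true, false])
  else (![2 * q.1.1, q.1.1], ![q.1.2 - q.2, 2 * q.2 - q.1.2], ![false, true])

theorem mem_image_ctParam {N : ℕ} {w h : Fin 2 → ℕ} {s : Fin 2 → Bool} :
    (w, h, s) ∈ ctParam '' ↑(N.divisorsAntidiagonal.sigma fun ve => range ve.2) ↔
      (∀ i, 1 ≤ w i ∧ (s i = false → 1 ≤ h i)) ∧
        ∑ i, (if s i then (1 : ℤ) else -1) * ((![1, 2] : Fin 2 → ℕ) i : ℤ) * (w i : ℤ) = 0 ∧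
        ∑ i, w i * h i = N := by
  obtain ⟨w₀, w₁, rfl⟩ : ∃ a b, w = ![a, b] := ⟨w 0, w 1, List.ofFn_inj.mp rfl⟩
  obtain ⟨h₀, h₁, rfl⟩ : ∃ a b, h = ![a, b] := ⟨h 0, h 1, List.ofFn_inj.mp rfl⟩
  obtain ⟨s₀, s₁, rfl⟩ : ∃ a b, s = ![a, b] := ⟨s 0, s 1, List.ofFn_inj.mp rfl⟩
  simp only [Fin.forall_fin_two, Fin.sum_univ_two, Matrix.cons_val_zero, Matrix.cons_val_one,
    Set.mem_image, mem_coe, mem_sigma, Nat.mem_divisorsAntidiagonal, mem_range, Sigma.exists]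
  constructor
  · rintro ⟨⟨v, e⟩, j, ⟨⟨hve, hN⟩, hj⟩, hx⟩
    dsimp only at hve hj ⊢
    have hv : 0 < v := Nat.pos_of_ne_zero (left_ne_zero_of_mul (hve ▸ hN))
    unfold ctParam at hx
    split_ifs at hx with hej <;>
    · dsimp only at hej
      simp only [Prod.mk.injEq, Matrix.vecCons_inj, and_true] at hx
      obtain ⟨⟨rfl, rfl⟩, ⟨hh₀, hh₁⟩, rfl, rfl⟩ := hx
      have he : 2 * h₀ + h₁ = e := by omega
      refine ⟨⟨⟨by omega, by rintro ⟨⟩ <;> omega⟩, hv, by rintro ⟨⟩ <;> omega⟩, by simp, ?_⟩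
      rw [← hve, ← he]
      ring
  · rintro ⟨⟨⟨hw₀, hh₀⟩, hw₁, hh₁⟩, hζ, hq⟩
    obtain ⟨rfl, rfl⟩ : w₀ = 2 * w₁ ∧ s₁ = !s₀ := by
      cases s₀ <;> cases s₁ <;>
        simp only [↓reduceIte, Bool.false_eq_true, Bool.not_false, Bool.not_true, and_true,
          and_false] at hζ ⊢ <;> omega
    have hve : w₁ * (2 * h₀ + h₁) = N := by rw [← hq]; ring
    cases s₀ <;> simp only [Bool.not_false, Bool.not_true, forall_const] at hh₀ hh₁
    · have hN : N ≠ 0 := hve ▸ (Nat.mul_pos hw₁ (by omega)).ne'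
      refine ⟨(w₁, 2 * h₀ + h₁), h₀ + h₁, ⟨⟨hve, hN⟩, by omega⟩, ?_⟩
      dsimp only [ctParam]
      rw [if_neg (by omega)]
      simp only [Prod.mk.injEq, Matrix.vecCons_inj, Bool.not_false, and_true, true_and]
      omega
    · have hN : N ≠ 0 := hve ▸ (Nat.mul_pos hw₁ (by omega)).ne'
      refine ⟨(w₁, 2 * h₀ + h₁), h₀, ⟨⟨hve, hN⟩, by omega⟩, ?_⟩
      dsimp only [ctParam]
      rw [if_pos (by omega)]
      simp only [Prod.mk.injEq, Matrix.vecCons_inj, Bool.not_true, and_true, true_and]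
      omega

theorem injOn_ctParam (N : ℕ) :
    Set.InjOn ctParam ↑(N.divisorsAntidiagonal.sigma fun ve => range ve.2) := by
  rintro ⟨⟨v, e⟩, j⟩ hq ⟨⟨v', e'⟩, j'⟩ hq' h
  simp only [mem_coe, mem_sigma, mem_range] at hq hq'
  obtain ⟨rfl, rfl, rfl⟩ : v = v' ∧ e = e' ∧ j = j' := by
    dsimp only [ctParam] at h
    split_ifs at h <;>
      simp only [Prod.mk.injEq, Matrix.vecCons_inj, Bool.true_eq_false, Bool.false_eq_true,
        and_false, and_true] at h <;> omega
  rfl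

theorem ctCoeff_P2_P2z (N : ℕ) :
    ctCoeff 2 ![2, 0] ![1, 2] (fun _ _ => True) N = 8 * N * σ 3 N := by
  have hsupp : {x : (Fin 2 → ℕ) × (Fin 2 → ℕ) × (Fin 2 → Bool) |
      (∀ i, 1 ≤ x.1 i ∧ True ∧ (x.2.2 i = false → 1 ≤ x.2.1 i)) ∧
      (∑ i, (if x.2.2 i then (1 : ℤ) else -1) * ((![1, 2] : Fin 2 → ℕ) i : ℤ) * (x.1 i : ℤ)) = 0 ∧
      (∑ i, x.1 i * x.2.1 i) = N} =
        ctParam '' ↑(N.divisorsAntidiagonal.sigma fun ve => range ve.2) := by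
    ext ⟨w, h, s⟩
    simp only [Set.mem_ofPred_eq, mem_image_ctParam, true_and]
  have hterm : ∀ q, ∏ i, ((ctParam q).1 i : ℚ) ^ ((![2, 0] : Fin 2 → ℕ) i + 1) = 8 * q.1.1 ^ 4 := by
    intro q
    unfold ctParam
    split_ifs <;>
    · simp only [Fin.prod_univ_two, Matrix.cons_val_zero, Matrix.cons_val_one]
      push_cast
      ring
  rw [ctCoeff, hsupp, finsum_mem_image (injOn_ctParam N), finsum_mem_coe_finset,
    sum_congr rfl fun q _ => hterm q, sum_sigma]
  simp only [sum_const, card_range, nsmul_eq_mul]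
  push_cast [ArithmeticFunction.sigma_apply, mul_sum,
    ← Nat.sum_divisorsAntidiagonal (fun d _ => (d : ℚ) ^ 3)]
  refine sum_congr rfl fun ve hve => ?_
  rw [← (Nat.mem_divisorsAntidiagonal.1 hve).1]
  push_cast
  ring

theorem bernoulli_four : bernoulli 4 = -1 / 30 := by
  rw [bernoulli_eq_bernoulli'_of_ne_one (by norm_num), bernoulli'_four]

theorem bernoulli_six : bernoulli 6 = 1 / 42 := by
  have h5 : bernoulli' 5 = 0 := bernoulli'_eq_zero_of_odd (by decide) (by norm_num)
  rw [bernoulli_eq_bernoulli'_of_ne_one (by norm_num), bernoulli'_def]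
  norm_num [sum_range_succ, h5, Nat.choose]

theorem Eis_eq_C_add_mk (k : ℕ) :
    Eis k = PowerSeries.C (-bernoulli (2 * k) / (4 * k)) +
      PowerSeries.mk fun n => (σ (2 * k - 1) n : ℚ) := by
  ext n
  rcases eq_or_ne n 0 with rfl | hn <;>
    simp [Eis, PowerSeries.coeff_C, ArithmeticFunction.sigma_apply, *]

/-- `[ζ⁰](P⁽²⁾(z)·P(2z)) = (28/5)·G₆(q) - 64·G₄(q)·G₂(q)`. -/
theorem ct_P2_P2z :
    ctSeries 2 ![2, 0] ![1, 2] (fun _ _ => True) =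
      (28 / 5 : ℚ) • Eis 3 - (64 : ℚ) • (Eis 2 * Eis 1) := by
  have hE₁ : Eis 1 = PowerSeries.C (-1 / 24) + PowerSeries.mk fun n => (σ 1 n : ℚ) := by
    rw [Eis_eq_C_add_mk]; norm_num [bernoulli_two]
  have hE₂ : Eis 2 = PowerSeries.C (1 / 240) + PowerSeries.mk fun n => (σ 3 n : ℚ) := by
    rw [Eis_eq_C_add_mk]; norm_num [bernoulli_four]
  have hE₃ : Eis 3 = PowerSeries.C (-1 / 504) + PowerSeries.mk fun n => (σ 5 n : ℚ) := by
    rw [Eis_eq_C_add_mk]; norm_num [bernoulli_six]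
  ext N
  simp only [hE₁, hE₂, hE₃, ctSeries, PowerSeries.coeff_mk, ctCoeff_P2_P2z, map_sub, map_add,
    PowerSeries.coeff_smul, add_mul, mul_add, PowerSeries.coeff_C_mul, PowerSeries.coeff_mul_C,
    PowerSeries.coeff_C, PowerSeries.coeff_mk, smul_eq_mul]
  rw [PowerSeries.coeff_mul]
  simp only [PowerSeries.coeff_mk, sum_antidiagonal_sigma_three_mul_sigma_one]
  split_ifs <;> ring

end
end
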